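/- arXiv:2401.15358 — 9 statements merged into one kernel-verified Lean document; each statement's English description precedes it below -/
import Mathlib

section
/- Let O, X₁, X₂, X₃ ∈ ℝ² and N₁, N₂, N₃ ∈ ℝ² satisfy φ(Nᵢ) ≤ 1 for i = 1,2,3, N₁ + N₂ + N₃ = 0, and Nᵢ·(Xᵢ − O)^⊥ = φ°((Xᵢ − O)^⊥) for each i (i.e. the conical triod with vertex O and endpoints X₁,X₂,X₃ admits a balanced constant Cahn–Hoffman field). Then for every point T ∈ ℝ² and all Lipschitz curves γᵢ : [0,1] → ℝ² with γᵢ(0) = T and γᵢ(1) = Xᵢ (i = 1,2,3), one has Σ_{i=1}^{3} ∫₀¹ φ°(γᵢ'(t)^⊥) dt ≥ Σ_{i=1}^{3} φ°((Xᵢ − O)^⊥). In other words, any triod of curves joining X₁, X₂, X₃ through a common point has φ-length at least that of the critical conical triod through O (the calibration core of the theorem that every conical critical triod is φ-minimal). -/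
/-- The crystalline norm `φ` whose unit ball is the regular hexagon circumscribed
to the unit circle with two horizontal facets. -/
noncomputable def phi (x : ℝ × ℝ) : ℝ :=
  max |x.2| (max (|Real.sqrt 3 * x.1 + x.2| / 2) (|Real.sqrt 3 * x.1 - x.2| / 2))

/-- The dual norm `φ°`. -/
noncomputable def phiD (ξ : ℝ × ℝ) : ℝ :=
  max (2 * |ξ.1| / Real.sqrt 3) (max |ξ.1 / Real.sqrt 3 + ξ.2| |ξ.1 / Real.sqrt 3 - ξ.2|)

/-- Counterclockwise rotation by 90°. -/
def perp (x : ℝ × ℝ) : ℝ × ℝ := (-x.2, x.1)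

/-- Euclidean scalar product on `ℝ × ℝ`. -/
def dot (x y : ℝ × ℝ) : ℝ := x.1 * y.1 + x.2 * y.2

/-! The constant fields `Nᵢ` calibrate the triod: since `φ Nᵢ ≤ 1`, the pointwise bound
`Nᵢ · v^⊥ ≤ φ°(v^⊥)` integrates along `γᵢ` to `Nᵢ · (Xᵢ - T)^⊥ ≤ ℓ_φ(γᵢ)` (Lipschitz curves are
absolutely continuous, so the fundamental theorem of calculus applies). As `N₁ + N₂ + N₃ = 0`,
the sum of the left-hand sides does not change when `T` is replaced by `O`, where it equals the
`φ`-length of the conical triod by the criticality hypotheses. -/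

open MeasureTheory Set

section Calibration

variable {E : Type*} [NormedAddCommGroup E] [NormedSpace ℝ E] [FiniteDimensional ℝ E]

theorem LipschitzWith.intervalIntegrable_comp_deriv {F : E → ℝ} (hF : Continuous F)
    {γ : ℝ → E} {K : NNReal} (hγ : LipschitzWith K γ) (a b : ℝ) :
    IntervalIntegrable (fun t => F (deriv γ t)) volume a b := by
  obtain ⟨C, hC⟩ := (isCompact_closedBall (0 : E) K).exists_bound_of_continuousOn hF.continuousOn
  refine (intervalIntegrable_const (c := C)).mono_fun'
    (hF.comp_aestronglyMeasurable (stronglyMeasurable_deriv γ).aestronglyMeasurable) ?_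
  exact ae_of_all _ fun t => hC _ (mem_closedBall_zero_iff.2 (norm_deriv_le_of_lipschitz hγ))

theorem LipschitzWith.apply_sub_le_integral_comp_deriv {L : E →L[ℝ] ℝ} {F : E → ℝ}
    (hF : Continuous F) (hLF : ∀ v, L v ≤ F v) {γ : ℝ → E} {K : NNReal}
    (hγ : LipschitzWith K γ) {a b : ℝ} (hab : a ≤ b) :
    L (γ b - γ a) ≤ ∫ t in a..b, F (deriv γ t) := by
  have hLγ : AbsolutelyContinuousOnInterval (L ∘ γ) a b :=
    ((L.lipschitz.comp hγ).lipschitzOnWith (s := uIcc a b)).absolutelyContinuousOnInterval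
  calc L (γ b - γ a) = ∫ t in a..b, deriv (L ∘ γ) t := by
        rw [hLγ.integral_deriv_eq_sub, map_sub, Function.comp_apply, Function.comp_apply]
    _ ≤ ∫ t in a..b, F (deriv γ t) := by
      refine intervalIntegral.integral_mono_ae hab hLγ.intervalIntegrable_deriv
        (hγ.intervalIntegrable_comp_deriv hF a b) ?_
      filter_upwards [hγ.ae_differentiableAt_real] with t ht
      rw [(L.hasFDerivAt.comp_hasDerivAt t ht.hasDerivAt).deriv]
      exact hLF _

end Calibration

/-- A linear form on the hexagon `|b|, |c|, |b - c| ≤ 1` is maximal at one of its vertices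
`±(1, 1), ±(1, 0), ±(0, 1)`. -/
theorem mul_add_mul_le_max_abs {b c u v : ℝ} (hb : |b| ≤ 1) (hc : |c| ≤ 1) (hbc : |b - c| ≤ 1) :
    b * u + c * v ≤ max |u + v| (max |u| |v|) := by
  rw [abs_le] at hb hc hbc
  rcases le_total 0 u with hu | hu <;> rcases le_total 0 v with hv | hv <;>
    rcases le_total 0 (u + v) with huv | huv <;>
    simp only [le_max_iff, abs_of_nonneg, abs_of_nonpos, *] <;>
    first
    | (left; nlinarith) | (right; left; nlinarith) | (right; right; nlinarith)

/-- In the coordinates `b, c` of `N` and `u, v` of `ξ` below, `φ N ≤ 1` reads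
`|b|, |c|, |b - c| ≤ 1` and `φ° ξ = max |u + v| (max |u| |v|)`. -/
theorem dot_le_phiD {N : ℝ × ℝ} (hN : phi N ≤ 1) (ξ : ℝ × ℝ) : dot N ξ ≤ phiD ξ := by
  have hs : (0 : ℝ) < √3 := by positivity
  simp only [phi, max_le_iff] at hN
  obtain ⟨h₀, hplus, hminus⟩ := hN
  have key := mul_add_mul_le_max_abs (b := (√3 * N.1 + N.2) / 2) (c := (√3 * N.1 - N.2) / 2)
    (u := ξ.1 / √3 + ξ.2) (v := ξ.1 / √3 - ξ.2)
    (by rw [abs_div, abs_two]; linarith) (by rw [abs_div, abs_two]; linarith)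
    (by rw [show (√3 * N.1 + N.2) / 2 - (√3 * N.1 - N.2) / 2 = N.2 by ring]; exact h₀)
  convert key using 1
  · simp only [dot]; field_simp; ring
  · rw [phiD, show ξ.1 / √3 + ξ.2 + (ξ.1 / √3 - ξ.2) = 2 * ξ.1 / √3 by ring, abs_div,
      abs_mul, abs_two, abs_of_pos hs]

theorem continuous_phiD : Continuous phiD := by
  unfold phiD; fun_prop

theorem continuous_perp : Continuous perp := by
  unfold perp; fun_prop

theorem dot_perp_sub_le_integral_phiD {N : ℝ × ℝ} (hN : phi N ≤ 1) {γ : ℝ → ℝ × ℝ}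
    {K : NNReal} (hγ : LipschitzWith K γ) {a b : ℝ} (hab : a ≤ b) :
    dot N (perp (γ b - γ a)) ≤ ∫ t in a..b, phiD (perp (deriv γ t)) := by
  let L : ℝ × ℝ →L[ℝ] ℝ :=
    N.2 • ContinuousLinearMap.fst ℝ ℝ ℝ - N.1 • ContinuousLinearMap.snd ℝ ℝ ℝ
  have hL : ∀ v, L v = dot N (perp v) := fun v => by
    simp only [L, sub_apply, smul_apply,
      ContinuousLinearMap.coe_fst', ContinuousLinearMap.coe_snd', smul_eq_mul, dot, perp]
    ring
  simpa only [hL, Function.comp_apply] using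
    hγ.apply_sub_le_integral_comp_deriv (continuous_phiD.comp continuous_perp)
      (fun v => (hL v).trans_le (dot_le_phiD hN _)) hab

theorem sum_dot_perp_sub_eq_of_add_eq_zero {N₁ N₂ N₃ : ℝ × ℝ} (hsum : N₁ + N₂ + N₃ = 0)
    (X₁ X₂ X₃ O T : ℝ × ℝ) :
    dot N₁ (perp (X₁ - O)) + dot N₂ (perp (X₂ - O)) + dot N₃ (perp (X₃ - O)) =
      dot N₁ (perp (X₁ - T)) + dot N₂ (perp (X₂ - T)) + dot N₃ (perp (X₃ - T)) := by
  have h₁ : N₁.1 + N₂.1 + N₃.1 = 0 := congrArg Prod.fst hsum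
  have h₂ : N₁.2 + N₂.2 + N₃.2 = 0 := congrArg Prod.snd hsum
  simp only [dot, perp, Prod.fst_sub, Prod.snd_sub]
  linear_combination (O.2 - T.2) * h₁ + (T.1 - O.1) * h₂

/-- Any triod of Lipschitz curves joining `X₁, X₂, X₃` through a common point `T` has
`φ`-length at least that of a critical conical triod through `O` (calibration core of
the minimality of conical critical triods). -/
theorem conical_critical_triod_is_minimal
    (O X₁ X₂ X₃ N₁ N₂ N₃ : ℝ × ℝ)
    (hN1 : phi N₁ ≤ 1) (hN2 : phi N₂ ≤ 1) (hN3 : phi N₃ ≤ 1)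
    (hsum : N₁ + N₂ + N₃ = 0)
    (hc1 : dot N₁ (perp (X₁ - O)) = phiD (perp (X₁ - O)))
    (hc2 : dot N₂ (perp (X₂ - O)) = phiD (perp (X₂ - O)))
    (hc3 : dot N₃ (perp (X₃ - O)) = phiD (perp (X₃ - O)))
    (T : ℝ × ℝ) (γ₁ γ₂ γ₃ : ℝ → ℝ × ℝ) (K₁ K₂ K₃ : NNReal)
    (hγ1 : LipschitzWith K₁ γ₁) (hγ2 : LipschitzWith K₂ γ₂) (hγ3 : LipschitzWith K₃ γ₃)
    (h10 : γ₁ 0 = T) (h20 : γ₂ 0 = T) (h30 : γ₃ 0 = T)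
    (h11 : γ₁ 1 = X₁) (h21 : γ₂ 1 = X₂) (h31 : γ₃ 1 = X₃) :
    phiD (perp (X₁ - O)) + phiD (perp (X₂ - O)) + phiD (perp (X₃ - O)) ≤
      (∫ t in (0:ℝ)..1, phiD (perp (deriv γ₁ t))) +
      (∫ t in (0:ℝ)..1, phiD (perp (deriv γ₂ t))) +
      (∫ t in (0:ℝ)..1, phiD (perp (deriv γ₃ t))) := by
  have e₁ := dot_perp_sub_le_integral_phiD hN1 hγ1 zero_le_one
  have e₂ := dot_perp_sub_le_integral_phiD hN2 hγ2 zero_le_one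
  have e₃ := dot_perp_sub_le_integral_phiD hN3 hγ3 zero_le_one
  rw [h10, h11] at e₁
  rw [h20, h21] at e₂
  rw [h30, h31] at e₃
  rw [← hc1, ← hc2, ← hc3, sum_dot_perp_sub_eq_of_add_eq_zero hsum X₁ X₂ X₃ O T]
  linarith
end

section
/- For R > 0 let X₁ = (R/√3, R), X₂ = (−R/√3, R), X₃ = −X₁, X₄ = −X₂ (the intersections with ∂B^φ_R of the four half-lines of the conical "X" network, which are parallel to facets of B^φ and do not lie in a half-plane), and write ℓ(P,Q) := φ°((Q−P)^⊥) for the φ-length of the segment [PQ]. Then for all T₁, T₂ ∈ ℝ² with φ(T₁) ≤ R and φ(T₂) ≤ R, both of the following hold: ℓ(X₁,T₁) + ℓ(X₄,T₁) + ℓ(T₁,T₂) + ℓ(X₂,T₂) + ℓ(X₃,T₂) ≥ 8R/√3 and ℓ(X₁,T₁) + ℓ(X₂,T₁) + ℓ(T₁,T₂) + ℓ(X₃,T₂) + ℓ(X₄,T₂) ≥ 8R/√3, where 8R/√3 = ℓ(0,X₁) + ℓ(0,X₂) + ℓ(0,X₃) + ℓ(0,X₄) is the φ-length of the conical X-network inside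 B^φ_R (the competitor-comparison core of the theorem that the quadruple X-junction is φ-minimal). -/
/-- The `φ`-length of the segment from `P` to `Q`. -/
noncomputable def ell (P Q : ℝ × ℝ) : ℝ := phiD (perp (Q - P))

lemma ell_eval (p q r t : ℝ) : ell (p, q) (r, t) = phiD (q - t, r - p) := by
  unfold ell perp; norm_num [Prod.ext_iff]

lemma phiD_ge1 (x y : ℝ) : x / Real.sqrt 3 + y ≤ phiD (x, y) :=
  le_trans (le_abs_self _) (le_trans (le_max_left _ _) (le_max_right _ _))

lemma phiD_ge2 (x y : ℝ) : x / Real.sqrt 3 - y ≤ phiD (x, y) :=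
  le_trans (le_abs_self _) (le_trans (le_max_right _ _) (le_max_right _ _))

lemma phiD_ge3 (x y : ℝ) : -(x / Real.sqrt 3 + y) ≤ phiD (x, y) :=
  le_trans (neg_le_abs _) (le_trans (le_max_left _ _) (le_max_right _ _))

lemma phiD_ge4 (x y : ℝ) : -(x / Real.sqrt 3 - y) ≤ phiD (x, y) :=
  le_trans (neg_le_abs _) (le_trans (le_max_right _ _) (le_max_right _ _))

lemma phiD_ge5 (x y : ℝ) : 2 * x / Real.sqrt 3 ≤ phiD (x, y) := by
  refine le_trans ?_ (le_max_left _ _)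
  gcongr
  exact le_abs_self _

lemma phiD_ge6 (x y : ℝ) : -(2 * x) / Real.sqrt 3 ≤ phiD (x, y) := by
  refine le_trans ?_ (le_max_left _ _)
  have hx : -(2 * x) ≤ 2 * |x| := by have := neg_le_abs x; linarith
  exact div_le_div_of_nonneg_right hx (Real.sqrt_nonneg 3)

lemma phiD_nonneg (x y : ℝ) : 0 ≤ phiD (x, y) :=
  le_trans (by positivity) (le_max_left (2 * |(x, y).1| / Real.sqrt 3) _)

/-- Competitor comparison for the minimality of the conical "X" quadruple junction:
any network joining the four endpoints `X₁, X₂, X₃, X₄` through two points `T₁, T₂` of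
`B^φ_R` (in either pairing) has `φ`-length at least `8R/√3`, the `φ`-length of the
conical X-network inside `B^φ_R`. -/
theorem X_junction_minimality (R : ℝ) (hR : 0 < R) (T₁ T₂ : ℝ × ℝ)
    (hT₁ : phi T₁ ≤ R) (hT₂ : phi T₂ ≤ R) :
    (8 * R / Real.sqrt 3 ≤
      ell ((R / Real.sqrt 3, R) : ℝ × ℝ) T₁ + ell ((R / Real.sqrt 3, -R) : ℝ × ℝ) T₁ +
      ell T₁ T₂ +
      ell ((-(R / Real.sqrt 3), R) : ℝ × ℝ) T₂ + ell ((-(R / Real.sqrt 3), -R) : ℝ × ℝ) T₂) ∧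
    (8 * R / Real.sqrt 3 ≤
      ell ((R / Real.sqrt 3, R) : ℝ × ℝ) T₁ + ell ((-(R / Real.sqrt 3), R) : ℝ × ℝ) T₁ +
      ell T₁ T₂ +
      ell ((-(R / Real.sqrt 3), -R) : ℝ × ℝ) T₂ + ell ((R / Real.sqrt 3, -R) : ℝ × ℝ) T₂) := by
  obtain ⟨a, b⟩ := T₁
  obtain ⟨c, d⟩ := T₂
  have hs : (0:ℝ) < Real.sqrt 3 := Real.sqrt_pos.mpr (by norm_num)
  constructor
  · -- pairing X₁,X₄ with T₁ and X₂,X₃ with T₂ : vertical calibration only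
    have h1 : 2 * (R - b) / Real.sqrt 3 ≤ ell ((R / Real.sqrt 3, R) : ℝ × ℝ) (a, b) := by
      rw [ell_eval]; exact phiD_ge5 _ _
    have h2 : -(2 * (-R - b)) / Real.sqrt 3 ≤ ell ((R / Real.sqrt 3, -R) : ℝ × ℝ) (a, b) := by
      rw [ell_eval]; exact phiD_ge6 _ _
    have h0 : (0:ℝ) ≤ ell (a, b) (c, d) := by rw [ell_eval]; exact phiD_nonneg _ _
    have h3 : 2 * (R - d) / Real.sqrt 3 ≤ ell ((-(R / Real.sqrt 3), R) : ℝ × ℝ) (c, d) := by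
      rw [ell_eval]; exact phiD_ge5 _ _
    have h4 : -(2 * (-R - d)) / Real.sqrt 3 ≤ ell ((-(R / Real.sqrt 3), -R) : ℝ × ℝ) (c, d) := by
      rw [ell_eval]; exact phiD_ge6 _ _
    ring_nf at h1 h2 h3 h4 ⊢
    linarith
  · -- pairing X₁,X₂ with T₁ and X₃,X₄ with T₂ : hexagon-vertex calibration
    have h1 : (R - b) / Real.sqrt 3 - (a - R / Real.sqrt 3) ≤
        ell ((R / Real.sqrt 3, R) : ℝ × ℝ) (a, b) := by
      rw [ell_eval]; exact phiD_ge2 _ _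
    have h2 : (R - b) / Real.sqrt 3 + (a - -(R / Real.sqrt 3)) ≤
        ell ((-(R / Real.sqrt 3), R) : ℝ × ℝ) (a, b) := by
      rw [ell_eval]; exact phiD_ge1 _ _
    have h0 : 2 * (b - d) / Real.sqrt 3 ≤ ell (a, b) (c, d) := by
      rw [ell_eval]; exact phiD_ge5 _ _
    have h3 : -((-R - d) / Real.sqrt 3 - (c - -(R / Real.sqrt 3))) ≤
        ell ((-(R / Real.sqrt 3), -R) : ℝ × ℝ) (c, d) := by
      rw [ell_eval]; exact phiD_ge4 _ _
    have h4 : -((-R - d) / Real.sqrt 3 + (c - R / Real.sqrt 3)) ≤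
        ell ((R / Real.sqrt 3, -R) : ℝ × ℝ) (c, d) := by
      rw [ell_eval]; exact phiD_ge3 _ _
    ring_nf at h0 h1 h2 h3 h4 ⊢
    linarith
end

section
/- Let γ : [0,1] → ℝ² be Lipschitz with γ'(t) ≠ 0 for a.e. t. Then the following are equivalent: (i) the curve admits a constant Cahn–Hoffman field, i.e. there exists N ∈ ℝ² with φ(N) = 1 and N·γ'(t)^⊥ = φ°(γ'(t)^⊥) for a.e. t ∈ [0,1]; (ii) there exists a facet F of B^{φ°} such that γ'(t)^⊥ / φ°(γ'(t)^⊥) ∈ F for a.e. t ∈ [0,1], where the facets of B^{φ°} are the six closed segments F°_j joining the consecutive vertices ρ^j(0,1) and ρ^{j+1}(0,1), j = 0,…,5, ρ being the counterclockwise rotation by 60°. -/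
/-- Counterclockwise rotation by 60°. -/
noncomputable def rot60 (x : ℝ × ℝ) : ℝ × ℝ :=
  (x.1 / 2 - Real.sqrt 3 / 2 * x.2, Real.sqrt 3 / 2 * x.1 + x.2 / 2)

/-- The `j`-th facet of the hexagon `B^{φ°}`: the closed segment joining the consecutive
vertices `ρ^j(0,1)` and `ρ^{j+1}(0,1)`, where `ρ` is the rotation by 60°. -/
noncomputable def facetD (j : ℕ) : Set (ℝ × ℝ) :=
  segment ℝ (rot60^[j] ((0 : ℝ), (1 : ℝ))) (rot60^[j + 1] ((0 : ℝ), (1 : ℝ)))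

-- helpers
lemma hs3 : Real.sqrt 3 * Real.sqrt 3 = 3 := Real.mul_self_sqrt (by norm_num)
lemma hs0 : (0:ℝ) < Real.sqrt 3 := Real.sqrt_pos.mpr (by norm_num)

noncomputable def NV : ℕ → ℝ × ℝ
  | 0 => (-(Real.sqrt 3)/3, 1)
  | 1 => (-(2*Real.sqrt 3)/3, 0)
  | 2 => (-(Real.sqrt 3)/3, -1)
  | 3 => ((Real.sqrt 3)/3, -1)
  | 4 => ((2*Real.sqrt 3)/3, 0)
  | _ => ((Real.sqrt 3)/3, 1)

noncomputable def V : ℕ → ℝ × ℝ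
  | 0 => (0, 1)
  | 1 => (-(Real.sqrt 3)/2, 1/2)
  | 2 => (-(Real.sqrt 3)/2, -1/2)
  | 3 => (0, -1)
  | 4 => ((Real.sqrt 3)/2, -1/2)
  | 5 => ((Real.sqrt 3)/2, 1/2)
  | _ => (0, 1)

lemma NV0 : NV 0 = (-(Real.sqrt 3)/3, 1) := rfl
lemma NV1 : NV 1 = (-(2*Real.sqrt 3)/3, 0) := rfl
lemma NV2 : NV 2 = (-(Real.sqrt 3)/3, -1) := rfl
lemma NV3 : NV 3 = ((Real.sqrt 3)/3, -1) := rfl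
lemma NV4 : NV 4 = ((2*Real.sqrt 3)/3, 0) := rfl
lemma NV5 : NV 5 = ((Real.sqrt 3)/3, 1) := rfl

lemma V0 : V 0 = ((0:ℝ), (1:ℝ)) := rfl
lemma V1 : V 1 = (-(Real.sqrt 3)/2, 1/2) := rfl
lemma V2 : V 2 = (-(Real.sqrt 3)/2, -1/2) := rfl
lemma V3 : V 3 = ((0:ℝ), (-1:ℝ)) := rfl
lemma V4 : V 4 = ((Real.sqrt 3)/2, -1/2) := rfl
lemma V5 : V 5 = ((Real.sqrt 3)/2, 1/2) := rfl
lemma V6 : V 6 = ((0:ℝ), (1:ℝ)) := rfl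

lemma rotV : ∀ j < 6, rot60 (V j) = V (j+1) := by
  intro j hj
  interval_cases j <;>
    refine Prod.ext ?_ ?_ <;>
    simp only [rot60, V] <;>
    first
      | ring1
      | linear_combination (-(1:ℝ)/4) * hs3
      | linear_combination ((1:ℝ)/4) * hs3

lemma vertex_eq : ∀ j ≤ 6, rot60^[j] ((0 : ℝ), (1 : ℝ)) = V j := by
  have e0 : rot60^[0] ((0 : ℝ), (1 : ℝ)) = V 0 := rfl
  have step : ∀ j < 6, rot60^[j] ((0 : ℝ), (1 : ℝ)) = V j →
      rot60^[j+1] ((0 : ℝ), (1 : ℝ)) = V (j+1) := by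
    intro j hj h
    rw [Function.iterate_succ_apply', h, rotV j hj]
  intro j hj
  interval_cases j
  · exact e0
  · exact step 0 (by norm_num) e0
  · exact step 1 (by norm_num) (step 0 (by norm_num) e0)
  · exact step 2 (by norm_num) (step 1 (by norm_num) (step 0 (by norm_num) e0))
  · exact step 3 (by norm_num) (step 2 (by norm_num) (step 1 (by norm_num) (step 0 (by norm_num) e0)))
  · exact step 4 (by norm_num) (step 3 (by norm_num) (step 2 (by norm_num) (step 1 (by norm_num) (step 0 (by norm_num) e0))))
  · exact step 5 (by norm_num) (step 4 (by norm_num) (step 3 (by norm_num) (step 2 (by norm_num) (step 1 (by norm_num) (step 0 (by norm_num) e0)))))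

lemma facetD_eq (j : ℕ) (hj : j < 6) : facetD j = segment ℝ (V j) (V (j+1)) := by
  unfold facetD
  rw [vertex_eq j (by omega), vertex_eq (j+1) (by omega)]

lemma dot_smul_right (x : ℝ × ℝ) (c : ℝ) (y : ℝ × ℝ) : dot x (c • y) = c * dot x y := by
  simp only [dot, Prod.smul_fst, Prod.smul_snd, smul_eq_mul]; ring

lemma dot_comb_left (a b : ℝ) (x y u : ℝ × ℝ) :
    dot (a • x + b • y) u = a * dot x u + b * dot y u := by
  simp only [dot, Prod.fst_add, Prod.snd_add, Prod.smul_fst, Prod.smul_snd, smul_eq_mul]; ring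

lemma dot_comb_right (a b : ℝ) (x y u : ℝ × ℝ) :
    dot u (a • x + b • y) = a * dot u x + b * dot u y := by
  simp only [dot, Prod.fst_add, Prod.snd_add, Prod.smul_fst, Prod.smul_snd, smul_eq_mul]; ring

lemma phiD_smul (a : ℝ) (ha : 0 ≤ a) (ξ : ℝ × ℝ) : phiD (a • ξ) = a * phiD ξ := by
  unfold phiD
  simp only [Prod.smul_fst, Prod.smul_snd, smul_eq_mul]
  rw [show a * ξ.1 / Real.sqrt 3 + a * ξ.2 = a * (ξ.1 / Real.sqrt 3 + ξ.2) by ring,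
    show a * ξ.1 / Real.sqrt 3 - a * ξ.2 = a * (ξ.1 / Real.sqrt 3 - ξ.2) by ring,
    abs_mul, abs_mul, abs_mul, abs_of_nonneg ha,
    show 2 * (a * |ξ.1|) / Real.sqrt 3 = a * (2 * |ξ.1| / Real.sqrt 3) by ring,
    mul_max_of_nonneg _ _ ha, mul_max_of_nonneg _ _ ha]

lemma phiD_pos (ξ : ℝ × ℝ) (h : ξ ≠ 0) : 0 < phiD ξ := by
  rcases lt_or_ge 0 (phiD ξ) with h' | h'
  · exact h'
  · exfalso; apply h
    have h1 : 2 * |ξ.1| / Real.sqrt 3 ≤ 0 := le_trans (le_max_left _ _) h'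
    have h1' : (0:ℝ) ≤ 2 * |ξ.1| / Real.sqrt 3 := by positivity
    have hx : ξ.1 = 0 := by
      have h2 : 2 * |ξ.1| / Real.sqrt 3 = 0 := le_antisymm h1 h1'
      have := hs0
      field_simp at h2
      have : |ξ.1| = 0 := by linarith [abs_nonneg ξ.1]
      exact abs_eq_zero.mp this
    have h3 : |ξ.1 / Real.sqrt 3 + ξ.2| ≤ 0 :=
      le_trans (le_trans (le_max_left _ _) (le_max_right _ _)) h'
    rw [hx] at h3
    simp at h3
    exact Prod.ext hx h3

lemma perp_ne_zero (x : ℝ × ℝ) (h : x ≠ 0) : perp x ≠ 0 := by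
  intro hc
  apply h
  unfold perp at hc
  rw [Prod.ext_iff] at hc ⊢
  simp at hc ⊢
  exact ⟨hc.2, hc.1⟩

lemma phiD_ineq (u : ℝ × ℝ) (h : phiD u ≤ 1) :
    2 * (Real.sqrt 3 * u.1) ≤ 3 ∧ -3 ≤ 2 * (Real.sqrt 3 * u.1) ∧
    Real.sqrt 3 * u.1 + 3 * u.2 ≤ 3 ∧ -3 ≤ Real.sqrt 3 * u.1 + 3 * u.2 ∧
    Real.sqrt 3 * u.1 - 3 * u.2 ≤ 3 ∧ -3 ≤ Real.sqrt 3 * u.1 - 3 * u.2 := by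
  unfold phiD at h
  have h1 : 2 * |u.1| / Real.sqrt 3 ≤ 1 := le_trans (le_max_left _ _) h
  have h2 : |u.1 / Real.sqrt 3 + u.2| ≤ 1 :=
    le_trans (le_trans (le_max_left _ _) (le_max_right _ _)) h
  have h3 : |u.1 / Real.sqrt 3 - u.2| ≤ 1 :=
    le_trans (le_trans (le_max_right _ _) (le_max_right _ _)) h
  rw [div_le_one hs0] at h1
  obtain ⟨h2a, h2b⟩ := abs_le.mp h2
  obtain ⟨h3a, h3b⟩ := abs_le.mp h3
  obtain ⟨ha1, ha2⟩ := abs_le.mp (show |u.1| ≤ Real.sqrt 3 / 2 by linarith)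
  have ds : ∀ x : ℝ, x / Real.sqrt 3 = Real.sqrt 3 * x / 3 := by
    intro x
    rw [div_eq_div_iff hs0.ne' (by norm_num : (3:ℝ) ≠ 0)]
    first
      | linear_combination x * hs3
      | linear_combination (-x) * hs3
      | linear_combination (2*x) * hs3
      | linear_combination (-2*x) * hs3
  have hsq : Real.sqrt 3 ^ 2 = 3 := Real.sq_sqrt (by norm_num)
  rw [ds] at h2a h2b h3a h3b
  have k1 := mul_le_mul_of_nonneg_left ha2 hs0.le
  have k2 := mul_le_mul_of_nonneg_left ha1 hs0.le
  refine ⟨by linarith [k1, hsq], by linarith [k2, hsq], by linarith,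
    by linarith, by linarith, by linarith⟩

lemma dot_NV_le (j : ℕ) (hj : j < 6) (u : ℝ × ℝ) (h : phiD u ≤ 1) : dot (NV j) u ≤ 1 := by
  obtain ⟨p1, p2, p3, p4, p5, p6⟩ := phiD_ineq u h
  interval_cases j <;> simp only [dot, NV0, NV1, NV2, NV3, NV4, NV5] <;> norm_num <;> linarith

lemma dot_NV_V (j : ℕ) (hj : j < 6) :
    dot (NV j) (V j) = 1 ∧ dot (NV j) (V (j+1)) = 1 := by
  interval_cases j <;>
    constructor <;>
    simp only [Nat.reduceAdd, dot, NV0, NV1, NV2, NV3, NV4, NV5, V0, V1, V2, V3, V4, V5, V6] <;>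
    first
      | ring1
      | linear_combination ((1:ℝ)/6) * hs3
      | linear_combination ((1:ℝ)/3) * hs3
      | norm_num

lemma phi_NV (j : ℕ) (hj : j < 6) : phi (NV j) = 1 := by
  interval_cases j
  · rw [NV0]; unfold phi
    rw [show Real.sqrt 3 * ((-(Real.sqrt 3)/3, (1:ℝ)).1) + (-(Real.sqrt 3)/3, (1:ℝ)).2 = 0 by
        linear_combination (-(1:ℝ)/3) * hs3,
      show Real.sqrt 3 * ((-(Real.sqrt 3)/3, (1:ℝ)).1) - (-(Real.sqrt 3)/3, (1:ℝ)).2 = -2 by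
        linear_combination (-(1:ℝ)/3) * hs3]
    norm_num
  · rw [NV1]; unfold phi
    rw [show Real.sqrt 3 * ((-(2*Real.sqrt 3)/3, (0:ℝ)).1) + (-(2*Real.sqrt 3)/3, (0:ℝ)).2 = -2 by
        linear_combination (-(2:ℝ)/3) * hs3,
      show Real.sqrt 3 * ((-(2*Real.sqrt 3)/3, (0:ℝ)).1) - (-(2*Real.sqrt 3)/3, (0:ℝ)).2 = -2 by
        linear_combination (-(2:ℝ)/3) * hs3]
    norm_num
  · rw [NV2]; unfold phi
    rw [show Real.sqrt 3 * ((-(Real.sqrt 3)/3, (-1:ℝ)).1) + (-(Real.sqrt 3)/3, (-1:ℝ)).2 = -2 by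
        linear_combination (-(1:ℝ)/3) * hs3,
      show Real.sqrt 3 * ((-(Real.sqrt 3)/3, (-1:ℝ)).1) - (-(Real.sqrt 3)/3, (-1:ℝ)).2 = 0 by
        linear_combination (-(1:ℝ)/3) * hs3]
    norm_num
  · rw [NV3]; unfold phi
    rw [show Real.sqrt 3 * (((Real.sqrt 3)/3, (-1:ℝ)).1) + ((Real.sqrt 3)/3, (-1:ℝ)).2 = 0 by
        linear_combination ((1:ℝ)/3) * hs3,
      show Real.sqrt 3 * (((Real.sqrt 3)/3, (-1:ℝ)).1) - ((Real.sqrt 3)/3, (-1:ℝ)).2 = 2 by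
        linear_combination ((1:ℝ)/3) * hs3]
    norm_num
  · rw [NV4]; unfold phi
    rw [show Real.sqrt 3 * (((2*Real.sqrt 3)/3, (0:ℝ)).1) + ((2*Real.sqrt 3)/3, (0:ℝ)).2 = 2 by
        linear_combination ((2:ℝ)/3) * hs3,
      show Real.sqrt 3 * (((2*Real.sqrt 3)/3, (0:ℝ)).1) - ((2*Real.sqrt 3)/3, (0:ℝ)).2 = 2 by
        linear_combination ((2:ℝ)/3) * hs3]
    norm_num
  · rw [NV5]; unfold phi
    rw [show Real.sqrt 3 * (((Real.sqrt 3)/3, (1:ℝ)).1) + ((Real.sqrt 3)/3, (1:ℝ)).2 = 2 by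
        linear_combination ((1:ℝ)/3) * hs3,
      show Real.sqrt 3 * (((Real.sqrt 3)/3, (1:ℝ)).1) - ((Real.sqrt 3)/3, (1:ℝ)).2 = 0 by
        linear_combination ((1:ℝ)/3) * hs3]
    norm_num

lemma seg_mem {u : ℝ × ℝ} (p1 p2 q1 q2 t : ℝ) (h0 : 0 ≤ t) (h1 : t ≤ 1)
    (e1 : (1-t)*p1 + t*q1 = u.1) (e2 : (1-t)*p2 + t*q2 = u.2) :
    u ∈ segment ℝ ((p1, p2) : ℝ × ℝ) ((q1, q2) : ℝ × ℝ) := by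
  refine ⟨1-t, t, by linarith, h0, by ring, ?_⟩
  have hc : (1-t) • ((p1, p2) : ℝ × ℝ) + t • ((q1, q2) : ℝ × ℝ)
      = ((1-t)*p1 + t*q1, (1-t)*p2 + t*q2) := rfl
  rw [hc]
  exact Prod.ext e1 e2

lemma facet_sub (j : ℕ) (hj : j < 6) (u : ℝ × ℝ) (hu : phiD u ≤ 1)
    (hd : dot (NV j) u = 1) : u ∈ facetD j := by
  obtain ⟨p1, p2, p3, p4, p5, p6⟩ := phiD_ineq u hu
  rw [facetD_eq j hj]
  interval_cases j
  · simp only [dot, NV0] at hd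
    have hd' : Real.sqrt 3 * u.1 = 3*u.2 - 3 := by linear_combination (-3 : ℝ) * hd
    show u ∈ segment ℝ (((0:ℝ), (1:ℝ)) : ℝ × ℝ) ((-(Real.sqrt 3)/2, 1/2) : ℝ × ℝ)
    exact seg_mem _ _ _ _ (2 - 2*u.2) (by linarith) (by linarith)
      (by linear_combination Real.sqrt 3 * hd + (u.1/3) * hs3) (by ring)
  · simp only [dot, NV1] at hd
    have hd' : Real.sqrt 3 * u.1 = -3/2 := by linear_combination (-3/2 : ℝ) * hd
    show u ∈ segment ℝ ((-(Real.sqrt 3)/2, 1/2) : ℝ × ℝ) ((-(Real.sqrt 3)/2, -1/2) : ℝ × ℝ)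
    exact seg_mem _ _ _ _ (1/2 - u.2) (by linarith) (by linarith)
      (by linear_combination (Real.sqrt 3/2) * hd + (u.1/3) * hs3) (by ring)
  · simp only [dot, NV2] at hd
    have hd' : Real.sqrt 3 * u.1 = -3*u.2 - 3 := by linear_combination (-3 : ℝ) * hd
    show u ∈ segment ℝ ((-(Real.sqrt 3)/2, -1/2) : ℝ × ℝ) (((0:ℝ), (-1:ℝ)) : ℝ × ℝ)
    exact seg_mem _ _ _ _ (-1 - 2*u.2) (by linarith) (by linarith)
      (by linear_combination Real.sqrt 3 * hd + (u.1/3) * hs3) (by ring)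
  · simp only [dot, NV3] at hd
    have hd' : Real.sqrt 3 * u.1 = 3*u.2 + 3 := by linear_combination (3 : ℝ) * hd
    show u ∈ segment ℝ (((0:ℝ), (-1:ℝ)) : ℝ × ℝ) (((Real.sqrt 3)/2, -1/2) : ℝ × ℝ)
    exact seg_mem _ _ _ _ (2 + 2*u.2) (by linarith) (by linarith)
      (by linear_combination (-(Real.sqrt 3)) * hd + (u.1/3) * hs3) (by ring)
  · simp only [dot, NV4] at hd
    have hd' : Real.sqrt 3 * u.1 = 3/2 := by linear_combination (3/2 : ℝ) * hd
    show u ∈ segment ℝ (((Real.sqrt 3)/2, -1/2) : ℝ × ℝ) (((Real.sqrt 3)/2, 1/2) : ℝ × ℝ)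
    exact seg_mem _ _ _ _ (u.2 + 1/2) (by linarith) (by linarith)
      (by linear_combination (-(Real.sqrt 3)/2) * hd + (u.1/3) * hs3) (by ring)
  · simp only [dot, NV5] at hd
    have hd' : Real.sqrt 3 * u.1 = 3 - 3*u.2 := by linear_combination (3 : ℝ) * hd
    show u ∈ segment ℝ (((Real.sqrt 3)/2, 1/2) : ℝ × ℝ) (((0:ℝ), (1:ℝ)) : ℝ × ℝ)
    exact seg_mem _ _ _ _ (2*u.2 - 1) (by linarith) (by linarith)
      (by linear_combination (-(Real.sqrt 3)) * hd + (u.1/3) * hs3) (by ring)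

lemma facet_dot (j : ℕ) (hj : j < 6) (u : ℝ × ℝ) (hu : u ∈ facetD j) :
    dot (NV j) u = 1 := by
  rw [facetD_eq j hj] at hu
  obtain ⟨a, b, ha, hb, hab, habu⟩ := hu
  obtain ⟨d1, d2⟩ := dot_NV_V j hj
  rw [← habu, dot_comb_right, d1, d2]
  linarith

lemma smul_pair (a b x1 x2 y1 y2 : ℝ) :
    a • ((x1, x2) : ℝ × ℝ) + b • ((y1, y2) : ℝ × ℝ) = (a*x1 + b*y1, a*x2 + b*y2) := rfl

lemma phi_decomp (N : ℝ × ℝ) (h : phi N = 1) :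
    ∃ j : ℕ, j < 6 ∧ ∃ a b : ℝ, 0 ≤ a ∧ 0 ≤ b ∧ a + b = 1 ∧
      N = a • NV j + b • NV ((j+1) % 6) := by
  unfold phi at h
  have hb2 : |N.2| ≤ 1 := h ▸ le_max_left _ _
  have hA2 : |Real.sqrt 3 * N.1 + N.2| / 2 ≤ 1 :=
    h ▸ le_trans (le_max_left _ _) (le_max_right _ _)
  have hB2 : |Real.sqrt 3 * N.1 - N.2| / 2 ≤ 1 :=
    h ▸ le_trans (le_max_right _ _) (le_max_right _ _)
  obtain ⟨hb2a, hb2b⟩ := abs_le.mp hb2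
  obtain ⟨hAa, hAb⟩ := abs_le.mp (show |Real.sqrt 3 * N.1 + N.2| ≤ 2 by linarith)
  obtain ⟨hBa, hBb⟩ := abs_le.mp (show |Real.sqrt 3 * N.1 - N.2| ≤ 2 by linarith)
  have hcase : |N.2| = 1 ∨ |Real.sqrt 3 * N.1 + N.2| = 2 ∨ |Real.sqrt 3 * N.1 - N.2| = 2 := by
    rcases max_cases |N.2| (max (|Real.sqrt 3 * N.1 + N.2| / 2) (|Real.sqrt 3 * N.1 - N.2| / 2))
      with ⟨he, _⟩ | ⟨he, _⟩
    · exact Or.inl (he.symm.trans h)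
    · rcases max_cases (|Real.sqrt 3 * N.1 + N.2| / 2) (|Real.sqrt 3 * N.1 - N.2| / 2)
        with ⟨he2, _⟩ | ⟨he2, _⟩
      · refine Or.inr (Or.inl ?_)
        have := he2.symm.trans (he.symm.trans h)
        linarith
      · refine Or.inr (Or.inr ?_)
        have := he2.symm.trans (he.symm.trans h)
        linarith
  rcases hcase with hc | hc | hc
  · rcases (abs_eq (by norm_num : (0:ℝ) ≤ 1)).mp hc with hE | hE
    · -- N.2 = 1, j = 5
      refine ⟨5, by norm_num, (1 + Real.sqrt 3 * N.1)/2, (1 - Real.sqrt 3 * N.1)/2,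
        by linarith, by linarith, by ring, ?_⟩
      show N = ((1 + Real.sqrt 3 * N.1)/2) • NV 5 + ((1 - Real.sqrt 3 * N.1)/2) • NV 0
      rw [NV5, NV0, smul_pair]
      exact Prod.ext (by linear_combination (-(N.1)/3) * hs3) (by linear_combination hE)
    · -- N.2 = -1, j = 2
      refine ⟨2, by norm_num, (1 - Real.sqrt 3 * N.1)/2, (1 + Real.sqrt 3 * N.1)/2,
        by linarith, by linarith, by ring, ?_⟩
      show N = ((1 - Real.sqrt 3 * N.1)/2) • NV 2 + ((1 + Real.sqrt 3 * N.1)/2) • NV 3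
      rw [NV2, NV3, smul_pair]
      exact Prod.ext (by linear_combination (-(N.1)/3) * hs3) (by linear_combination hE)
  · rcases (abs_eq (by norm_num : (0:ℝ) ≤ 2)).mp hc with hE | hE
    · -- √3N₁+N₂ = 2, j = 4
      refine ⟨4, by norm_num, 1 - N.2, N.2, by linarith, by linarith, by ring, ?_⟩
      show N = (1 - N.2) • NV 4 + N.2 • NV 5
      rw [NV4, NV5, smul_pair]
      exact Prod.ext (by linear_combination ((Real.sqrt 3)/3) * hE + (-(N.1)/3) * hs3) (by ring)
    · -- √3N₁+N₂ = -2, j = 1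
      refine ⟨1, by norm_num, 1 + N.2, -N.2, by linarith, by linarith, by ring, ?_⟩
      show N = (1 + N.2) • NV 1 + (-N.2) • NV 2
      rw [NV1, NV2, smul_pair]
      exact Prod.ext (by linear_combination ((Real.sqrt 3)/3) * hE + (-(N.1)/3) * hs3) (by ring)
  · rcases (abs_eq (by norm_num : (0:ℝ) ≤ 2)).mp hc with hE | hE
    · -- √3N₁-N₂ = 2, j = 3
      refine ⟨3, by norm_num, -N.2, 1 + N.2, by linarith, by linarith, by ring, ?_⟩
      show N = (-N.2) • NV 3 + (1 + N.2) • NV 4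
      rw [NV3, NV4, smul_pair]
      exact Prod.ext (by linear_combination ((Real.sqrt 3)/3) * hE + (-(N.1)/3) * hs3) (by ring)
    · -- √3N₁-N₂ = -2, j = 0
      refine ⟨0, by norm_num, N.2, 1 - N.2, by linarith, by linarith, by ring, ?_⟩
      show N = N.2 • NV 0 + (1 - N.2) • NV 1
      rw [NV0, NV1, smul_pair]
      exact Prod.ext (by linear_combination ((Real.sqrt 3)/3) * hE + (-(N.1)/3) * hs3) (by ring)


/-- A Lipschitz curve with a.e. nonvanishing derivative admits a constant Cahn–Hoffman
field if and only if the normalized normal `γ'(t)^⊥ / φ°(γ'(t)^⊥)` lies a.e. in a single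
facet of `B^{φ°}`. -/
theorem constant_CahnHoffman_iff_normal_in_facet
    (γ : ℝ → ℝ × ℝ) (K : NNReal) (hγ : LipschitzWith K γ)
    (hne : ∀ᵐ t ∂(MeasureTheory.volume.restrict (Set.Icc (0:ℝ) 1)), deriv γ t ≠ 0) :
    (∃ N : ℝ × ℝ, phi N = 1 ∧
        ∀ᵐ t ∂(MeasureTheory.volume.restrict (Set.Icc (0:ℝ) 1)),
          dot N (perp (deriv γ t)) = phiD (perp (deriv γ t))) ↔
    (∃ j : ℕ, j < 6 ∧
        ∀ᵐ t ∂(MeasureTheory.volume.restrict (Set.Icc (0:ℝ) 1)),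
          (phiD (perp (deriv γ t)))⁻¹ • perp (deriv γ t) ∈ facetD j) := by
  constructor
  · rintro ⟨N, hφN, hae⟩
    obtain ⟨j, hj6, a, b, ha, hb, hab, hN⟩ := phi_decomp N hφN
    have hj'6 : (j+1) % 6 < 6 := Nat.mod_lt _ (by norm_num)
    by_cases hA : 0 < a
    · refine ⟨j, hj6, ?_⟩
      filter_upwards [hne, hae] with t h0 hd
      have hc : 0 < phiD (perp (deriv γ t)) := phiD_pos _ (perp_ne_zero _ h0)
      set ξ := perp (deriv γ t) with hξdef
      set u := (phiD ξ)⁻¹ • ξ with hudef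
      have hu1 : phiD u ≤ 1 := by
        rw [hudef, phiD_smul _ (inv_nonneg.mpr hc.le), inv_mul_cancel₀ hc.ne']
      have hud : dot N u = 1 := by
        rw [hudef, dot_smul_right, hd, inv_mul_cancel₀ hc.ne']
      have hx := dot_NV_le j hj6 _ hu1
      have hy := dot_NV_le ((j+1) % 6) hj'6 _ hu1
      have hsum : a * dot (NV j) u + b * dot (NV ((j+1) % 6)) u = 1 := by
        rw [← dot_comb_left, ← hN, hud]
      apply facet_sub j hj6 _ hu1
      have h1 : a * (1 - dot (NV j) u) + b * (1 - dot (NV ((j+1) % 6)) u) = 0 := by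
        have e : a * (1 - dot (NV j) u) + b * (1 - dot (NV ((j+1) % 6)) u)
            = (a + b) - (a * dot (NV j) u + b * dot (NV ((j+1) % 6)) u) := by ring
        rw [e, hab, hsum]; ring
      have h2 : 0 ≤ b * (1 - dot (NV ((j+1) % 6)) u) := mul_nonneg hb (by linarith)
      have h3 : 0 ≤ a * (1 - dot (NV j) u) := mul_nonneg hA.le (by linarith)
      have h4 : a * (1 - dot (NV j) u) = 0 := by linarith
      rcases mul_eq_zero.mp h4 with h5 | h5
      · exact absurd h5 hA.ne'
      · linarith
    · have ha0 : a = 0 := le_antisymm (not_lt.mp hA) ha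
      have hb1 : b = 1 := by linarith
      refine ⟨(j+1) % 6, hj'6, ?_⟩
      filter_upwards [hne, hae] with t h0 hd
      have hc : 0 < phiD (perp (deriv γ t)) := phiD_pos _ (perp_ne_zero _ h0)
      set ξ := perp (deriv γ t) with hξdef
      set u := (phiD ξ)⁻¹ • ξ with hudef
      have hu1 : phiD u ≤ 1 := by
        rw [hudef, phiD_smul _ (inv_nonneg.mpr hc.le), inv_mul_cancel₀ hc.ne']
      have hud : dot N u = 1 := by
        rw [hudef, dot_smul_right, hd, inv_mul_cancel₀ hc.ne']
      have hsum : a * dot (NV j) u + b * dot (NV ((j+1) % 6)) u = 1 := by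
        rw [← dot_comb_left, ← hN, hud]
      apply facet_sub ((j+1) % 6) hj'6 _ hu1
      rw [ha0, hb1] at hsum
      linarith
  · rintro ⟨j, hj6, hae⟩
    refine ⟨NV j, phi_NV j hj6, ?_⟩
    filter_upwards [hne, hae] with t h0 hmem
    have hc : 0 < phiD (perp (deriv γ t)) := phiD_pos _ (perp_ne_zero _ h0)
    have h1 := facet_dot j hj6 _ hmem
    rw [dot_smul_right] at h1
    field_simp [hc.ne'] at h1
    linarith
end

section
/- Let n ≥ 1 and let (aᵢ)ᵢ, (bᵢ)ᵢ be nonnegative reals and (c_{ij}) nonnegative reals with c_{ij} = c_{ji} and c_{ii} = 0 for all i, j ∈ {1,…,n}; if n ≥ 2 assume the matrix C = (c_{ij}) is irreducible, i.e. for every i ≠ j there exists m ≥ 1 with (C^m)_{ij} > 0. Let d > 0 and define ψ(x) := Σᵢ aᵢ xᵢ² + Σᵢ bᵢ (d − xᵢ)² + Σ_{i<j} c_{ij}(xᵢ − xⱼ)² for x ∈ ℝⁿ. Then the minimum of ψ over the cube [0,d]ⁿ equals 0 if and only if either aᵢ = 0 for all i or bᵢ = 0 for all i. -/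
/-- Quadratic minimization lemma (zero-minimum characterization): the minimum of
`ψ(x) = Σᵢ aᵢxᵢ² + Σᵢ bᵢ(d−xᵢ)² + Σ_{i<j} c_{ij}(xᵢ−xⱼ)²` over the cube `[0,d]ⁿ`
equals `0` if and only if all `aᵢ` vanish or all `bᵢ` vanish. -/
theorem quadratic_minimization_zero_iff
    (n : ℕ) (hn : 1 ≤ n) (a b : Fin n → ℝ) (c : Fin n → Fin n → ℝ)
    (ha : ∀ i, 0 ≤ a i) (hb : ∀ i, 0 ≤ b i) (hc : ∀ i j, 0 ≤ c i j)
    (hsymm : ∀ i j, c i j = c j i) (hdiag : ∀ i, c i i = 0)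
    (hirr : 2 ≤ n → ∀ i j : Fin n, i ≠ j →
      ∃ m : ℕ, 1 ≤ m ∧ 0 < ((Matrix.of c) ^ m) i j)
    (d : ℝ) (hd : 0 < d)
    (ψ : (Fin n → ℝ) → ℝ)
    (hψ : ψ = fun x => (∑ i, a i * x i ^ 2) + (∑ i, b i * (d - x i) ^ 2) +
      ∑ i, ∑ j, if i < j then c i j * (x i - x j) ^ 2 else 0) :
    sInf (ψ '' {x | ∀ i, x i ∈ Set.Icc (0 : ℝ) d}) = 0 ↔
      ((∀ i, a i = 0) ∨ (∀ i, b i = 0)) := by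
  have hA : ∀ x : Fin n → ℝ, 0 ≤ ∑ i, a i * x i ^ 2 := fun x =>
    Finset.sum_nonneg fun i _ => mul_nonneg (ha i) (sq_nonneg _)
  have hB : ∀ x : Fin n → ℝ, 0 ≤ ∑ i, b i * (d - x i) ^ 2 := fun x =>
    Finset.sum_nonneg fun i _ => mul_nonneg (hb i) (sq_nonneg _)
  have hC : ∀ x : Fin n → ℝ,
      0 ≤ ∑ i, ∑ j, if i < j then c i j * (x i - x j) ^ 2 else 0 := fun x =>
    Finset.sum_nonneg fun i _ => Finset.sum_nonneg fun j _ => by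
      split
      · exact mul_nonneg (hc i j) (sq_nonneg _)
      · exact le_refl 0
  have hψ_nonneg : ∀ x : Fin n → ℝ, 0 ≤ ψ x := by
    intro x
    rw [hψ]
    have := hA x; have := hB x; have := hC x
    dsimp only
    linarith
  set S : Set (Fin n → ℝ) := {x | ∀ i, x i ∈ Set.Icc (0 : ℝ) d} with hSdef
  have hSne : S.Nonempty := ⟨fun _ => 0, fun i => ⟨le_refl 0, hd.le⟩⟩
  have hlb : ∀ y ∈ ψ '' S, (0:ℝ) ≤ y := by
    rintro y ⟨z, _, rfl⟩; exact hψ_nonneg z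
  constructor
  · intro hinf
    -- minimizer exists by compactness
    have hScomp : IsCompact S := by
      have : S = Set.pi Set.univ (fun _ : Fin n => Set.Icc (0:ℝ) d) := by
        ext x
        simp only [hSdef, Set.mem_setOf_eq, Set.mem_pi, Set.mem_univ, forall_true_left,
          Set.mem_Icc, true_implies]
      rw [this]
      exact isCompact_univ_pi fun _ => isCompact_Icc
    have hcont : ContinuousOn ψ S := by
      rw [hψ]
      apply Continuous.continuousOn
      apply Continuous.add
      apply Continuous.add
      · exact continuous_finset_sum _ fun i _ => by fun_prop
      · exact continuous_finset_sum _ fun i _ => by fun_prop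
      · refine continuous_finset_sum _ fun i _ => continuous_finset_sum _ fun j _ => ?_
        by_cases h : i < j <;> simp only [h, if_true, if_false] <;> fun_prop
    obtain ⟨x, hxS, hxmin⟩ := hScomp.exists_isMinOn hSne hcont
    have hx0 : ψ x = 0 := by
      refine le_antisymm ?_ (hψ_nonneg x)
      rw [← hinf]
      refine le_csInf (hSne.image ψ) ?_
      rintro y ⟨z, hz, rfl⟩
      exact hxmin hz
    rw [hψ] at hx0
    dsimp only at hx0
    have hAx : ∑ i, a i * x i ^ 2 = 0 := by
      have := hA x; have := hB x; have := hC x; linarith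
    have hBx : ∑ i, b i * (d - x i) ^ 2 = 0 := by
      have := hA x; have := hB x; have := hC x; linarith
    have hCx : (∑ i, ∑ j, if i < j then c i j * (x i - x j) ^ 2 else 0) = 0 := by
      have := hA x; have := hB x; have := hC x; linarith
    have hAterm : ∀ i, a i * x i ^ 2 = 0 := by
      intro i
      exact (Finset.sum_eq_zero_iff_of_nonneg
        (fun i _ => mul_nonneg (ha i) (sq_nonneg _))).mp hAx i (Finset.mem_univ i)
    have hBterm : ∀ i, b i * (d - x i) ^ 2 = 0 := by
      intro i
      exact (Finset.sum_eq_zero_iff_of_nonneg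
        (fun i _ => mul_nonneg (hb i) (sq_nonneg _))).mp hBx i (Finset.mem_univ i)
    have hCterm : ∀ i j : Fin n, i < j → c i j * (x i - x j) ^ 2 = 0 := by
      intro i j hij
      have hrow := (Finset.sum_eq_zero_iff_of_nonneg
        (fun i _ => Finset.sum_nonneg fun j _ => by
          split
          · exact mul_nonneg (hc i j) (sq_nonneg _)
          · exact le_refl 0)).mp hCx i (Finset.mem_univ i)
      have := (Finset.sum_eq_zero_iff_of_nonneg
        (fun j _ => by
          split
          · exact mul_nonneg (hc i j) (sq_nonneg _)
          · exact le_refl 0)).mp hrow j (Finset.mem_univ j)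
      simpa [hij] using this
    -- edges of the graph force equality
    have hedge : ∀ i j : Fin n, 0 < c i j → x i = x j := by
      intro i j hpos
      rcases lt_trichotomy i j with h | h | h
      · have := hCterm i j h
        have h2 : (x i - x j) ^ 2 = 0 := by
          by_contra hne
          have : 0 < (x i - x j) ^ 2 := lt_of_le_of_ne (sq_nonneg _) (Ne.symm hne)
          nlinarith
        have := pow_eq_zero_iff (n := 2) (by norm_num) |>.mp h2
        linarith [sub_eq_zero.mp this]
      · exact absurd (h ▸ hdiag i) (by rw [h] at hpos; rw [hdiag] at hpos; exact fun _ => lt_irrefl 0 hpos)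
      · have := hCterm j i h
        rw [← hsymm i j] at this
        have h2 : (x j - x i) ^ 2 = 0 := by
          by_contra hne
          have : 0 < (x j - x i) ^ 2 := lt_of_le_of_ne (sq_nonneg _) (Ne.symm hne)
          nlinarith
        have := pow_eq_zero_iff (n := 2) (by norm_num) |>.mp h2
        linarith [sub_eq_zero.mp this]
    -- powers of nonnegative matrix are nonnegative
    have hpow_nonneg : ∀ m : ℕ, ∀ i j : Fin n, 0 ≤ ((Matrix.of c) ^ m) i j := by
      intro m
      induction m with
      | zero =>
        intro i j
        rw [pow_zero, Matrix.one_apply]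
        split <;> norm_num
      | succ m ih =>
        intro i j
        rw [pow_succ, Matrix.mul_apply]
        exact Finset.sum_nonneg fun k _ => mul_nonneg (ih i k) (hc k j)
    -- positive entries of powers force equality
    have hpath : ∀ m : ℕ, ∀ i j : Fin n, 0 < ((Matrix.of c) ^ m) i j → x i = x j := by
      intro m
      induction m with
      | zero =>
        intro i j h
        rw [pow_zero, Matrix.one_apply] at h
        split at h
        · subst ‹i = j›; rfl
        · exact absurd h (lt_irrefl 0)
      | succ m ih =>
        intro i j h
        rw [pow_succ, Matrix.mul_apply] at h
        have hex : ∃ k ∈ Finset.univ (α := Fin n),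
            0 < ((Matrix.of c) ^ m) i k * (Matrix.of c) k j := by
          by_contra hcon
          push_neg at hcon
          have : (∑ k, ((Matrix.of c) ^ m) i k * (Matrix.of c) k j) ≤ 0 :=
            Finset.sum_nonpos fun k hk => hcon k hk
          linarith
        obtain ⟨k, _, hk⟩ := hex
        have h1 : 0 < ((Matrix.of c) ^ m) i k := by
          by_contra hne
          push_neg at hne
          have : ((Matrix.of c) ^ m) i k = 0 := le_antisymm hne (hpow_nonneg m i k)
          rw [this, zero_mul] at hk
          exact lt_irrefl 0 hk
        have h2 : 0 < (Matrix.of c) k j := by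
          by_contra hne
          push_neg at hne
          have : (Matrix.of c) k j = 0 := le_antisymm hne (hc k j)
          rw [this, mul_zero] at hk
          exact lt_irrefl 0 hk
        exact (ih i k h1).trans (hedge k j h2)
    -- x is constant
    have hconst : ∀ i j : Fin n, x i = x j := by
      intro i j
      by_cases hij : i = j
      · rw [hij]
      · have h2 : 2 ≤ n := by
          by_contra h
          push_neg at h
          have : n = 1 := by omega
          subst this
          exact hij (Subsingleton.elim i j)
        obtain ⟨m, _, hmpos⟩ := hirr h2 i j hij
        exact hpath m i j hmpos
    have i0 : Fin n := ⟨0, hn⟩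
    by_cases ht : x i0 = 0
    · right
      intro i
      have hx : x i = 0 := (hconst i i0).trans ht
      have := hBterm i
      rw [hx] at this
      have hd2 : (d - 0) ^ 2 > 0 := by nlinarith
      nlinarith
    · left
      intro i
      have hx : x i = x i0 := hconst i i0
      have := hAterm i
      rw [hx] at this
      have hd2 : (x i0) ^ 2 > 0 :=
        lt_of_le_of_ne (sq_nonneg _) (Ne.symm (pow_ne_zero 2 ht))
      nlinarith
  · intro hab
    have hmem : (0:ℝ) ∈ ψ '' S := by
      rcases hab with hall | hall
      · refine ⟨fun _ => d, fun i => ⟨hd.le, le_refl d⟩, ?_⟩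
        rw [hψ]
        simp [hall]
      · refine ⟨fun _ => 0, fun i => ⟨le_refl 0, hd.le⟩, ?_⟩
        rw [hψ]
        simp [hall]
    exact le_antisymm (csInf_le ⟨0, hlb⟩ hmem) (le_csInf ⟨0, hmem⟩ hlb)
end

section
/- Let n ≥ 1 and let (aᵢ)ᵢ, (bᵢ)ᵢ be nonnegative reals and (c_{ij}) nonnegative reals with c_{ij} = c_{ji} and c_{ii} = 0 for all i, j ∈ {1,…,n}; if n ≥ 2 assume the matrix C = (c_{ij}) is irreducible, i.e. for every i ≠ j there exists m ≥ 1 with (C^m)_{ij} > 0. Let d > 0 and define ψ(x) := Σᵢ aᵢ xᵢ² + Σᵢ bᵢ (d − xᵢ)² + Σ_{i<j} c_{ij}(xᵢ − xⱼ)² for x ∈ ℝⁿ. If the minimum of ψ over [0,d]ⁿ is strictly positive, then ψ has a unique minimizer x⁰ on [0,d]ⁿ, and this minimizer lies in the open cube (0,d)ⁿ. -/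
open Finset

lemma qmuim_sum_update (n : ℕ) (x : Fin n → ℝ) (i : Fin n) (t : ℝ) (g : Fin n → ℝ → ℝ) :
    ∑ k, g k (Function.update x i t k) = (∑ k, g k (x k)) + (g i t - g i (x i)) := by
  rw [← Finset.sum_erase_add _ _ (Finset.mem_univ i),
      ← Finset.sum_erase_add Finset.univ (fun k => g k (x k)) (Finset.mem_univ i),
      Function.update_self]
  have h : ∑ k ∈ Finset.univ.erase i, g k (Function.update x i t k)
      = ∑ k ∈ Finset.univ.erase i, g k (x k) :=
    Finset.sum_congr rfl fun k hk => by rw [Function.update_of_ne (Finset.ne_of_mem_erase hk)]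
  rw [h]; ring

lemma qmuim_pair_half (n : ℕ) (c : Fin n → Fin n → ℝ)
    (hsymm : ∀ i j, c i j = c j i) (hdiag : ∀ i, c i i = 0) (x : Fin n → ℝ) :
    (∑ k, ∑ l, if k < l then c k l * (x k - x l) ^ 2 else 0)
      = (∑ k, ∑ l, c k l * (x k - x l) ^ 2) / 2 := by
  have key : (∑ k, ∑ l, c k l * (x k - x l) ^ 2)
      = (∑ k, ∑ l, if k < l then c k l * (x k - x l) ^ 2 else 0)
        + (∑ k, ∑ l, if l < k then c k l * (x k - x l) ^ 2 else 0) := by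
    rw [← Finset.sum_add_distrib]
    refine Finset.sum_congr rfl fun k _ => ?_
    rw [← Finset.sum_add_distrib]
    refine Finset.sum_congr rfl fun l _ => ?_
    rcases lt_trichotomy k l with h | h | h
    · simp [h, asymm h]
    · subst h; simp [lt_irrefl, hdiag k]
    · simp [h, asymm h]
  have swap : (∑ k, ∑ l, if l < k then c k l * (x k - x l) ^ 2 else 0)
      = (∑ k, ∑ l, if k < l then c k l * (x k - x l) ^ 2 else 0) := by
    rw [Finset.sum_comm]
    refine Finset.sum_congr rfl fun k _ => Finset.sum_congr rfl fun l _ => ?_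
    rw [hsymm l k]
    ring_nf
  rw [key, swap]; ring

lemma qmuim_pair_update (n : ℕ) (c : Fin n → Fin n → ℝ)
    (hsymm : ∀ i j, c i j = c j i) (hdiag : ∀ i, c i i = 0)
    (x : Fin n → ℝ) (i : Fin n) (t : ℝ) :
    (∑ k, ∑ l, c k l * (Function.update x i t k - Function.update x i t l) ^ 2)
      = (∑ k, ∑ l, c k l * (x k - x l) ^ 2)
        + (2 * (∑ j, c i j) * (t ^ 2 - x i ^ 2) - 4 * (∑ j, c i j * x j) * (t - x i)) := by
  set u := Function.update x i t with hu
  have step1 : (∑ k, ∑ l, c k l * (u k - u l) ^ 2)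
      = ∑ k, ((∑ l, c k l * (u k - x l) ^ 2)
          + (c k i * (u k - t) ^ 2 - c k i * (u k - x i) ^ 2)) :=
    Finset.sum_congr rfl fun k _ => qmuim_sum_update n x i t (fun l s => c k l * (u k - s) ^ 2)
  have step2 : (∑ k, ((∑ l, c k l * (u k - x l) ^ 2)
          + (c k i * (u k - t) ^ 2 - c k i * (u k - x i) ^ 2)))
      = (∑ k, ((∑ l, c k l * (x k - x l) ^ 2)
          + (c k i * (x k - t) ^ 2 - c k i * (x k - x i) ^ 2)))
        + ((((∑ l, c i l * (t - x l) ^ 2)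
          + (c i i * (t - t) ^ 2 - c i i * (t - x i) ^ 2)))
          - (((∑ l, c i l * (x i - x l) ^ 2)
          + (c i i * (x i - t) ^ 2 - c i i * (x i - x i) ^ 2)))) :=
    qmuim_sum_update n x i t
      (fun k s => (∑ l, c k l * (s - x l) ^ 2) + (c k i * (s - t) ^ 2 - c k i * (s - x i) ^ 2))
  rw [step1, step2, Finset.sum_add_distrib, hdiag i]
  have h1 : (∑ k, (c k i * (x k - t) ^ 2 - c k i * (x k - x i) ^ 2))
      = ∑ l, (c i l * (t - x l) ^ 2 - c i l * (x i - x l) ^ 2) :=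
    Finset.sum_congr rfl fun k _ => by rw [hsymm k i]; ring
  have h2 : ∀ (w : ℝ), (∑ l, (c i l * (w - x l) ^ 2))
      = (∑ l, c i l) * w ^ 2 - (∑ l, c i l * x l) * (2 * w) + (∑ l, c i l * x l ^ 2) := by
    intro w
    calc (∑ l, (c i l * (w - x l) ^ 2))
        = ∑ l, ((c i l) * w ^ 2 - (c i l * x l) * (2 * w) + (c i l * x l ^ 2)) :=
          Finset.sum_congr rfl fun l _ => by ring
      _ = _ := by
          rw [Finset.sum_add_distrib, Finset.sum_sub_distrib, Finset.sum_mul, Finset.sum_mul]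
  rw [h1, Finset.sum_sub_distrib, h2 t, h2 (x i)]
  ring

lemma qmuim_expr_update (n : ℕ) (a b : Fin n → ℝ) (c : Fin n → Fin n → ℝ)
    (hsymm : ∀ i j, c i j = c j i) (hdiag : ∀ i, c i i = 0) (d : ℝ)
    (x : Fin n → ℝ) (i : Fin n) (t : ℝ) :
    ((∑ k, a k * (Function.update x i t k) ^ 2)
      + (∑ k, b k * (d - Function.update x i t k) ^ 2)
      + ∑ k, ∑ l, if k < l then
          c k l * (Function.update x i t k - Function.update x i t l) ^ 2 else 0)
    = ((∑ k, a k * x k ^ 2) + (∑ k, b k * (d - x k) ^ 2)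
        + ∑ k, ∑ l, if k < l then c k l * (x k - x l) ^ 2 else 0)
      + ((a i + b i + ∑ j, c i j) * (t ^ 2 - x i ^ 2)
        - 2 * (b i * d + ∑ j, c i j * x j) * (t - x i)) := by
  have hA := qmuim_sum_update n x i t (fun k s => a k * s ^ 2)
  have hB := qmuim_sum_update n x i t (fun k s => b k * (d - s) ^ 2)
  rw [qmuim_pair_half n c hsymm hdiag (Function.update x i t),
      qmuim_pair_half n c hsymm hdiag x,
      qmuim_pair_update n c hsymm hdiag x i t, hA, hB]
  ring

lemma qmuim_prop_zero (n : ℕ) (c : Fin n → Fin n → ℝ) (P : Fin n → Prop)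
    (h : ∀ k l, P k → ¬ P l → c k l = 0) :
    ∀ (m : ℕ) (k l : Fin n), P k → ¬ P l → ((Matrix.of c) ^ m) k l = 0 := by
  intro m
  induction m with
  | zero =>
    intro k l hk hl
    have hkl : k ≠ l := fun e => hl (e ▸ hk)
    simp [Matrix.one_apply_ne hkl]
  | succ m ih =>
    intro k l hk hl
    rw [pow_succ, Matrix.mul_apply]
    apply Finset.sum_eq_zero
    intro p _
    by_cases hp : P p
    · have : (Matrix.of c) p l = 0 := h p l hp hl
      rw [this, mul_zero]
    · rw [ih k p hk hp, zero_mul]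

lemma qmuim_prop_eq (n : ℕ) (c : Fin n → Fin n → ℝ) (v : Fin n → ℝ)
    (h : ∀ k l, c k l ≠ 0 → v k = v l) :
    ∀ (m : ℕ) (k l : Fin n), ((Matrix.of c) ^ m) k l ≠ 0 → v k = v l := by
  intro m
  induction m with
  | zero =>
    intro k l hkl
    by_cases e : k = l
    · rw [e]
    · exact absurd (by simp [Matrix.one_apply_ne e]) hkl
  | succ m ih =>
    intro k l hkl
    rw [pow_succ, Matrix.mul_apply] at hkl
    obtain ⟨p, _, hp⟩ := Finset.exists_ne_zero_of_sum_ne_zero hkl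
    exact (ih k p (left_ne_zero_of_mul hp)).trans (h p l (right_ne_zero_of_mul hp))

lemma qmuim_quad (d K L : ℝ) (hd : 0 < d)
    (h : ∀ t, 0 < t → t ≤ d → 0 ≤ K * t ^ 2 - 2 * L * t) : L ≤ 0 := by
  by_contra hL
  push_neg at hL
  rcases le_or_gt K 0 with hK | hK
  · have := h d hd le_rfl
    nlinarith
  · have htd : 0 < min d (L / K) := lt_min hd (div_pos hL hK)
    have hmain := h (min d (L / K)) htd (min_le_left _ _)
    have h2 : K * min d (L / K) ≤ L := by
      have h3 := min_le_right d (L / K)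
      have : K * min d (L / K) ≤ K * (L / K) := by nlinarith
      rwa [mul_div_cancel₀ _ (ne_of_gt hK)] at this
    nlinarith [mul_le_mul_of_nonneg_right h2 htd.le, mul_pos hL htd]

lemma qmuim_midpoint (n : ℕ) (a b : Fin n → ℝ) (c : Fin n → Fin n → ℝ) (d : ℝ)
    (x y : Fin n → ℝ) :
    (((∑ k, a k * ((x k + y k)/2) ^ 2) + (∑ k, b k * (d - (x k + y k)/2) ^ 2)
      + ∑ k, ∑ l, if k < l then c k l * ((x k + y k)/2 - (x l + y l)/2) ^ 2 else 0)
      + ((∑ k, a k * ((x k - y k)/2) ^ 2) + (∑ k, b k * ((x k - y k)/2) ^ 2)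
      + ∑ k, ∑ l, if k < l then c k l * ((x k - y k)/2 - (x l - y l)/2) ^ 2 else 0))
    = (((∑ k, a k * x k ^ 2) + (∑ k, b k * (d - x k) ^ 2)
        + ∑ k, ∑ l, if k < l then c k l * (x k - x l) ^ 2 else 0)
      + ((∑ k, a k * y k ^ 2) + (∑ k, b k * (d - y k) ^ 2)
        + ∑ k, ∑ l, if k < l then c k l * (y k - y l) ^ 2 else 0)) / 2 := by
  have hA : (∑ k, a k * ((x k + y k)/2) ^ 2) + (∑ k, a k * ((x k - y k)/2) ^ 2)
      = ((∑ k, a k * x k ^ 2) + (∑ k, a k * y k ^ 2)) / 2 := by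
    rw [add_div, Finset.sum_div, Finset.sum_div, ← Finset.sum_add_distrib,
      ← Finset.sum_add_distrib]
    exact Finset.sum_congr rfl fun k _ => by ring
  have hB : (∑ k, b k * (d - (x k + y k)/2) ^ 2) + (∑ k, b k * ((x k - y k)/2) ^ 2)
      = ((∑ k, b k * (d - x k) ^ 2) + (∑ k, b k * (d - y k) ^ 2)) / 2 := by
    rw [add_div, Finset.sum_div, Finset.sum_div, ← Finset.sum_add_distrib,
      ← Finset.sum_add_distrib]
    exact Finset.sum_congr rfl fun k _ => by ring
  have hC : (∑ k, ∑ l, if k < l then c k l * ((x k + y k)/2 - (x l + y l)/2) ^ 2 else 0)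
      + (∑ k, ∑ l, if k < l then c k l * ((x k - y k)/2 - (x l - y l)/2) ^ 2 else 0)
      = ((∑ k, ∑ l, if k < l then c k l * (x k - x l) ^ 2 else 0)
        + (∑ k, ∑ l, if k < l then c k l * (y k - y l) ^ 2 else 0)) / 2 := by
    rw [add_div, Finset.sum_div, Finset.sum_div, ← Finset.sum_add_distrib,
      ← Finset.sum_add_distrib]
    refine Finset.sum_congr rfl fun k _ => ?_
    rw [Finset.sum_div, Finset.sum_div, ← Finset.sum_add_distrib, ← Finset.sum_add_distrib]
    refine Finset.sum_congr rfl fun l _ => ?_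
    split_ifs with h
    · ring
    · simp
  linarith [hA, hB, hC]

/-- Quadratic minimization lemma (uniqueness and interiority of the minimizer): if the
minimum of `ψ(x) = Σᵢ aᵢxᵢ² + Σᵢ bᵢ(d−xᵢ)² + Σ_{i<j} c_{ij}(xᵢ−xⱼ)²` over `[0,d]ⁿ` is
strictly positive, then `ψ` has a unique minimizer over the cube `[0,d]ⁿ`, which lies
in the open cube `(0,d)ⁿ`. -/
theorem quadratic_minimization_unique_interior_minimizer
    (n : ℕ) (hn : 1 ≤ n) (a b : Fin n → ℝ) (c : Fin n → Fin n → ℝ)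
    (ha : ∀ i, 0 ≤ a i) (hb : ∀ i, 0 ≤ b i) (hc : ∀ i j, 0 ≤ c i j)
    (hsymm : ∀ i j, c i j = c j i) (hdiag : ∀ i, c i i = 0)
    (hirr : 2 ≤ n → ∀ i j : Fin n, i ≠ j →
      ∃ m : ℕ, 1 ≤ m ∧ 0 < ((Matrix.of c) ^ m) i j)
    (d : ℝ) (hd : 0 < d)
    (ψ : (Fin n → ℝ) → ℝ)
    (hψ : ψ = fun x => (∑ i, a i * x i ^ 2) + (∑ i, b i * (d - x i) ^ 2) +
      ∑ i, ∑ j, if i < j then c i j * (x i - x j) ^ 2 else 0)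
    (hpos : 0 < sInf (ψ '' {x | ∀ i, x i ∈ Set.Icc (0 : ℝ) d})) :
    ∃ x : Fin n → ℝ, (∀ i, x i ∈ Set.Ioo (0 : ℝ) d) ∧
      (∀ y : Fin n → ℝ, (∀ i, y i ∈ Set.Icc (0 : ℝ) d) → ψ x ≤ ψ y) ∧
      (∀ y : Fin n → ℝ, (∀ i, y i ∈ Set.Icc (0 : ℝ) d) →
        (∀ z : Fin n → ℝ, (∀ i, z i ∈ Set.Icc (0 : ℝ) d) → ψ y ≤ ψ z) → y = x) := by
  classical
  set S : Set (Fin n → ℝ) := {x | ∀ i, x i ∈ Set.Icc (0 : ℝ) d} with hS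
  -- nonnegativity of ψ
  have hψnn : ∀ y, 0 ≤ ψ y := by
    intro y
    rw [hψ]
    refine add_nonneg (add_nonneg ?_ ?_) ?_
    · exact Finset.sum_nonneg fun i _ => mul_nonneg (ha i) (sq_nonneg _)
    · exact Finset.sum_nonneg fun i _ => mul_nonneg (hb i) (sq_nonneg _)
    · refine Finset.sum_nonneg fun i _ => Finset.sum_nonneg fun j _ => ?_
      split_ifs
      · exact mul_nonneg (hc i j) (sq_nonneg _)
      · exact le_rfl
  have hbdd : BddBelow (ψ '' S) := ⟨0, by rintro r ⟨z, hz, rfl⟩; exact hψnn z⟩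
  have hmemle : ∀ z ∈ S, 0 < ψ z := fun z hz =>
    lt_of_lt_of_le hpos (csInf_le hbdd ⟨z, hz, rfl⟩)
  -- compactness
  have hScomp : IsCompact S := by
    have hEq : S = Set.Icc (0 : Fin n → ℝ) (fun _ => d) := by
      ext z
      simp [hS, Set.mem_Icc, Pi.le_def, Set.mem_setOf_eq, forall_and]
    rw [hEq]
    exact isCompact_Icc
  have hcont : Continuous ψ := by
    rw [hψ]
    refine Continuous.add (Continuous.add ?_ ?_) ?_
    · exact continuous_finset_sum _ fun i _ => by fun_prop
    · exact continuous_finset_sum _ fun i _ => by fun_prop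
    · refine continuous_finset_sum _ fun i _ => continuous_finset_sum _ fun j _ => ?_
      by_cases h : i < j <;> simp [h] <;> fun_prop
  have hSne : S.Nonempty := ⟨0, fun i => by simp [Set.mem_Icc, le_of_lt hd]⟩
  obtain ⟨x, hxS, hxmin'⟩ := hScomp.exists_isMinOn hSne hcont.continuousOn
  have hxmin : ∀ y ∈ S, ψ x ≤ ψ y := fun y hy => hxmin' hy
  -- update formula for ψ
  have hup : ∀ (z : Fin n → ℝ) (i : Fin n) (t : ℝ),
      ψ (Function.update z i t) = ψ z + ((a i + b i + ∑ j, c i j) * (t ^ 2 - z i ^ 2)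
        - 2 * (b i * d + ∑ j, c i j * z j) * (t - z i)) := by
    intro z i t
    rw [hψ]
    exact qmuim_expr_update n a b c hsymm hdiag d z i t
  -- membership of updates
  have hupmem : ∀ (i : Fin n) (t : ℝ), 0 ≤ t → t ≤ d → Function.update x i t ∈ S := by
    intro i t ht0 htd k
    by_cases hk : k = i
    · subst hk; rw [Function.update_self]; exact ⟨ht0, htd⟩
    · rw [Function.update_of_ne hk]; exact hxS k
  -- boundary condition at 0
  have hbc0 : ∀ i : Fin n, x i = 0 → b i = 0 ∧ ∀ j, c i j * x j = 0 := by
    intro i hxi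
    have hL : (b i * d + ∑ j, c i j * x j) ≤ 0 := by
      apply qmuim_quad d _ _ hd
      intro t ht0 htd
      have hmem := hupmem i t ht0.le htd
      have hle := hxmin _ hmem
      have heq := hup x i t
      rw [hxi] at heq
      nlinarith [hle, heq]
    have hterms : ∀ j, 0 ≤ c i j * x j := fun j => mul_nonneg (hc i j) (hxS j).1
    have hsum : 0 ≤ ∑ j, c i j * x j := Finset.sum_nonneg fun j _ => hterms j
    have hbd0 : 0 ≤ b i * d := mul_nonneg (hb i) hd.le
    refine ⟨?_, ?_⟩
    · have hbd : b i * d = 0 := le_antisymm (by linarith) hbd0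
      exact (mul_eq_zero.mp hbd).resolve_right (ne_of_gt hd)
    · have hs0 : ∑ j, c i j * x j = 0 := le_antisymm (by linarith) hsum
      intro j
      exact (Finset.sum_eq_zero_iff_of_nonneg fun j _ => hterms j).mp hs0 j (Finset.mem_univ j)
  -- boundary condition at d
  have hbcd : ∀ i : Fin n, x i = d → a i = 0 ∧ ∀ j, c i j * (d - x j) = 0 := by
    intro i hxi
    have hKL : (a i + b i + ∑ j, c i j) * d - (b i * d + ∑ j, c i j * x j)
        = a i * d + ∑ j, c i j * (d - x j) := by
      have hsplit : ∑ j, c i j * (d - x j) = (∑ j, c i j) * d - ∑ j, c i j * x j := by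
        rw [Finset.sum_mul, ← Finset.sum_sub_distrib]
        exact Finset.sum_congr rfl fun j _ => by ring
      rw [hsplit]; ring
    have hL : (a i * d + ∑ j, c i j * (d - x j)) ≤ 0 := by
      apply qmuim_quad d _ _ hd
      intro u hu0 hud
      have hmem := hupmem i (d - u) (by linarith) (by linarith)
      have hle := hxmin _ hmem
      have heq := hup x i (d - u)
      rw [hxi] at heq
      nlinarith [hle, heq, hKL]
    have hterms : ∀ j, 0 ≤ c i j * (d - x j) := fun j =>
      mul_nonneg (hc i j) (by linarith [(hxS j).2])
    have hsum : 0 ≤ ∑ j, c i j * (d - x j) := Finset.sum_nonneg fun j _ => hterms j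
    have had0 : 0 ≤ a i * d := mul_nonneg (ha i) hd.le
    refine ⟨?_, ?_⟩
    · have had : a i * d = 0 := le_antisymm (by linarith) had0
      exact (mul_eq_zero.mp had).resolve_right (ne_of_gt hd)
    · have hs0 : ∑ j, c i j * (d - x j) = 0 := le_antisymm (by linarith) hsum
      intro j
      exact (Finset.sum_eq_zero_iff_of_nonneg fun j _ => hterms j).mp hs0 j (Finset.mem_univ j)
  -- no coordinate is 0
  have hx0 : ∀ i, x i ≠ 0 := by
    intro i hxi
    have hall : ∀ k, x k = 0 := by
      by_contra hne
      push_neg at hne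
      obtain ⟨l, hl⟩ := hne
      have hil : i ≠ l := fun e => hl (e ▸ hxi)
      have hn2 : 2 ≤ n := by
        by_contra h2
        push_neg at h2
        have hn1 : n = 1 := le_antisymm (Nat.lt_succ_iff.mp h2) hn
        subst hn1
        exact hil (Subsingleton.elim i l)
      have hedge : ∀ k l', x k = 0 → ¬ x l' = 0 → c k l' = 0 := by
        intro k l' hk hl'
        rcases mul_eq_zero.mp ((hbc0 k hk).2 l') with h | h
        · exact h
        · exact absurd h hl'
      obtain ⟨m, _, hmpos⟩ := hirr hn2 i l hil
      have hz := qmuim_prop_zero n c (fun k => x k = 0) hedge m i l hxi hl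
      rw [hz] at hmpos
      exact lt_irrefl 0 hmpos
    have hball : ∀ k, b k = 0 := fun k => (hbc0 k (hall k)).1
    have hzero : ψ x = 0 := by
      rw [hψ]
      have e1 : ∑ k, a k * x k ^ 2 = 0 :=
        Finset.sum_eq_zero fun k _ => by rw [hall k]; ring
      have e2 : ∑ k, b k * (d - x k) ^ 2 = 0 :=
        Finset.sum_eq_zero fun k _ => by rw [hball k]; ring
      have e3 : ∑ k, ∑ l, (if k < l then c k l * (x k - x l) ^ 2 else 0) = 0 :=
        Finset.sum_eq_zero fun k _ => Finset.sum_eq_zero fun l _ => by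
          rw [hall k, hall l]; simp
      simp only []
      rw [e1, e2, e3]; ring
    exact absurd hzero (ne_of_gt (hmemle x hxS))
  -- no coordinate is d
  have hxd : ∀ i, x i ≠ d := by
    intro i hxi
    have hall : ∀ k, x k = d := by
      by_contra hne
      push_neg at hne
      obtain ⟨l, hl⟩ := hne
      have hil : i ≠ l := fun e => hl (e ▸ hxi)
      have hn2 : 2 ≤ n := by
        by_contra h2
        push_neg at h2
        have hn1 : n = 1 := le_antisymm (Nat.lt_succ_iff.mp h2) hn
        subst hn1
        exact hil (Subsingleton.elim i l)
      have hedge : ∀ k l', x k = d → ¬ x l' = d → c k l' = 0 := by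
        intro k l' hk hl'
        rcases mul_eq_zero.mp ((hbcd k hk).2 l') with h | h
        · exact h
        · exact absurd (by linarith [sub_eq_zero.mp h]) hl'
      obtain ⟨m, _, hmpos⟩ := hirr hn2 i l hil
      have hz := qmuim_prop_zero n c (fun k => x k = d) hedge m i l hxi hl
      rw [hz] at hmpos
      exact lt_irrefl 0 hmpos
    have haall : ∀ k, a k = 0 := fun k => (hbcd k (hall k)).1
    have hzero : ψ x = 0 := by
      rw [hψ]
      have e1 : ∑ k, a k * x k ^ 2 = 0 :=
        Finset.sum_eq_zero fun k _ => by rw [haall k]; ring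
      have e2 : ∑ k, b k * (d - x k) ^ 2 = 0 :=
        Finset.sum_eq_zero fun k _ => by rw [hall k]; ring
      have e3 : ∑ k, ∑ l, (if k < l then c k l * (x k - x l) ^ 2 else 0) = 0 :=
        Finset.sum_eq_zero fun k _ => Finset.sum_eq_zero fun l _ => by
          rw [hall k, hall l]; simp
      simp only []
      rw [e1, e2, e3]; ring
    exact absurd hzero (ne_of_gt (hmemle x hxS))
  refine ⟨x, ?_, fun y hy => hxmin y hy, ?_⟩
  · intro i
    exact ⟨lt_of_le_of_ne (hxS i).1 (Ne.symm (hx0 i)), lt_of_le_of_ne (hxS i).2 (hxd i)⟩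
  -- uniqueness
  intro y hyS hymin
  have hxy : ψ y = ψ x := le_antisymm (hymin x hxS) (hxmin y hyS)
  set z : Fin n → ℝ := fun k => (x k + y k) / 2 with hzdef
  have hzS : z ∈ S := by
    intro k
    have h1 := (hxS k).1; have h2 := (hxS k).2
    have h3 := (hyS k).1; have h4 := (hyS k).2
    constructor
    · show (0:ℝ) ≤ (x k + y k) / 2; linarith
    · show (x k + y k) / 2 ≤ d; linarith
  have hmid := qmuim_midpoint n a b c d x y
  have hzpsi : ψ z + ((∑ k, a k * ((x k - y k)/2) ^ 2) + (∑ k, b k * ((x k - y k)/2) ^ 2)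
      + ∑ k, ∑ l, if k < l then c k l * ((x k - y k)/2 - (x l - y l)/2) ^ 2 else 0)
      = (ψ x + ψ y) / 2 := by
    rw [hψ]
    exact hmid
  have hzge := hxmin z hzS
  have hQle : ((∑ k, a k * ((x k - y k)/2) ^ 2) + (∑ k, b k * ((x k - y k)/2) ^ 2)
      + ∑ k, ∑ l, if k < l then c k l * ((x k - y k)/2 - (x l - y l)/2) ^ 2 else 0) ≤ 0 := by
    rw [hxy] at hzpsi
    linarith
  have hQa : 0 ≤ ∑ k, a k * ((x k - y k)/2) ^ 2 :=
    Finset.sum_nonneg fun k _ => mul_nonneg (ha k) (sq_nonneg _)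
  have hQb : 0 ≤ ∑ k, b k * ((x k - y k)/2) ^ 2 :=
    Finset.sum_nonneg fun k _ => mul_nonneg (hb k) (sq_nonneg _)
  have hQcterm : ∀ k l : Fin n,
      (0:ℝ) ≤ if k < l then c k l * ((x k - y k)/2 - (x l - y l)/2) ^ 2 else 0 := by
    intro k l; split_ifs
    · exact mul_nonneg (hc k l) (sq_nonneg _)
    · exact le_rfl
  have hQc : 0 ≤ ∑ k, ∑ l, if k < l then c k l * ((x k - y k)/2 - (x l - y l)/2) ^ 2 else 0 :=
    Finset.sum_nonneg fun k _ => Finset.sum_nonneg fun l _ => hQcterm k l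
  have hQa0 : ∑ k, a k * ((x k - y k)/2) ^ 2 = 0 := le_antisymm (by linarith) hQa
  have hQb0 : ∑ k, b k * ((x k - y k)/2) ^ 2 = 0 := le_antisymm (by linarith) hQb
  have hQc0 : ∑ k, ∑ l, (if k < l then c k l * ((x k - y k)/2 - (x l - y l)/2) ^ 2 else 0) = 0 :=
    le_antisymm (by linarith) hQc
  set v : Fin n → ℝ := fun k => (x k - y k) / 2 with hvdef
  have hQaterm : ∀ k, a k * v k ^ 2 = 0 := fun k =>
    (Finset.sum_eq_zero_iff_of_nonneg fun k _ =>
      mul_nonneg (ha k) (sq_nonneg _)).mp hQa0 k (Finset.mem_univ k)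
  have hQbterm : ∀ k, b k * v k ^ 2 = 0 := fun k =>
    (Finset.sum_eq_zero_iff_of_nonneg fun k _ =>
      mul_nonneg (hb k) (sq_nonneg _)).mp hQb0 k (Finset.mem_univ k)
  have hQcterm0 : ∀ k l : Fin n, k < l → c k l * (v k - v l) ^ 2 = 0 := by
    intro k l hkl
    have hinner : ∑ l', (if k < l' then c k l' * (v k - v l') ^ 2 else 0) = 0 :=
      (Finset.sum_eq_zero_iff_of_nonneg fun k' _ =>
        Finset.sum_nonneg fun l' _ => hQcterm k' l').mp hQc0 k (Finset.mem_univ k)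
    have := (Finset.sum_eq_zero_iff_of_nonneg fun l' _ => hQcterm k l').mp hinner l
      (Finset.mem_univ l)
    simpa [hkl] using this
  have hvedge : ∀ k l, c k l ≠ 0 → v k = v l := by
    intro k l hckl
    rcases lt_trichotomy k l with h | h | h
    · have := hQcterm0 k l h
      rcases mul_eq_zero.mp this with h' | h'
      · exact absurd h' hckl
      · have := pow_eq_zero_iff (n := 2) (by norm_num) |>.mp h'
        linarith [sub_eq_zero.mp this]
    · rw [h]
    · have hc' : c l k ≠ 0 := by rw [hsymm l k]; exact hckl
      have := hQcterm0 l k h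
      rw [hsymm l k] at this
      rcases mul_eq_zero.mp this with h' | h'
      · exact absurd h' hckl
      · have := pow_eq_zero_iff (n := 2) (by norm_num) |>.mp h'
        linarith [sub_eq_zero.mp this]
  have hvconst : ∀ k l : Fin n, v k = v l := by
    intro k l
    by_cases hkl : k = l
    · rw [hkl]
    · by_cases hn2 : 2 ≤ n
      · obtain ⟨m, _, hmpos⟩ := hirr hn2 k l hkl
        exact qmuim_prop_eq n c v hvedge m k l (ne_of_gt hmpos)
      · push_neg at hn2
        have hn1 : n = 1 := le_antisymm (Nat.lt_succ_iff.mp hn2) hn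
        subst hn1
        exact absurd (Subsingleton.elim k l) hkl
  -- the common value must be 0
  set i0 : Fin n := ⟨0, hn⟩ with hi0
  have hvall : ∀ k, v k = v i0 := fun k => hvconst k i0
  by_cases hr : v i0 = 0
  · funext k
    have : v k = 0 := (hvall k).trans hr
    have : (x k - y k) / 2 = 0 := this
    linarith [this]
  · exfalso
    have haall : ∀ k, a k = 0 := by
      intro k
      have h1 := hQaterm k
      have h2 : v k ≠ 0 := fun e => hr ((hvall k).symm.trans e)
      rcases mul_eq_zero.mp h1 with h | h
      · exact h
      · exact absurd (pow_eq_zero_iff (n := 2) (by norm_num) |>.mp h) h2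
    have hball : ∀ k, b k = 0 := by
      intro k
      have h1 := hQbterm k
      have h2 : v k ≠ 0 := fun e => hr ((hvall k).symm.trans e)
      rcases mul_eq_zero.mp h1 with h | h
      · exact h
      · exact absurd (pow_eq_zero_iff (n := 2) (by norm_num) |>.mp h) h2
    have hwS : (fun _ : Fin n => d / 2) ∈ S := by
      intro k; constructor
      · show (0:ℝ) ≤ d / 2; linarith
      · show d / 2 ≤ d; linarith
    have hwzero : ψ (fun _ => d / 2) = 0 := by
      rw [hψ]
      simp only []
      have e1 : ∑ k : Fin n, a k * (d/2) ^ 2 = 0 :=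
        Finset.sum_eq_zero fun k _ => by rw [haall k]; ring
      have e2 : ∑ k : Fin n, b k * (d - d/2) ^ 2 = 0 :=
        Finset.sum_eq_zero fun k _ => by rw [hball k]; ring
      have e3 : ∑ k : Fin n, ∑ l : Fin n,
          (if k < l then c k l * ((d:ℝ)/2 - d/2) ^ 2 else 0) = 0 :=
        Finset.sum_eq_zero fun k _ => Finset.sum_eq_zero fun l _ => by
          split_ifs <;> simp
      rw [e1, e2, e3]; ring
    exact absurd hwzero (ne_of_gt (hmemle _ hwS))
end

section
/- Let ρ be the counterclockwise rotation of ℝ² by 60°, τ a unit vector, and τ₁, τ₃ unit vectors with τ₁·τ = 1/2 and τ₃·τ = 1/2 (so the three segment directions τ₁, τ, τ₃ make consecutive 120° angles, with turns in either direction); set ν₁ := τ₁^⊥, ν₂ := τ^⊥, ν₃ := τ₃^⊥. Let a₂ > 0, h₁, h₂, h₃ ∈ ℝ and P₁, P₂, P̄₁, P̄₂ ∈ ℝ² satisfy P₂ − P₁ = a₂·τ, (P̄₁ − P₁)·ν₁ = h₁, (P̄₁ − P₁)·ν₂ = h₂, (P̄₂ − P₂)·ν₂ = h₂, (P̄₂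 − P₂)·ν₃ = h₃. Then |(P̄₂ − P̄₁)·τ − a₂| ≤ (2/√3)(|h₁| + |h₂| + |h₃|); in particular, if |hⱼ| ≤ a₂/(3√3) for j = 1,2,3, then (P̄₂ − P̄₁)·τ ≥ a₂/3 > 0, so the translated middle segment has positive length at least one third of the original. -/
/-- Quantitative injectivity bound: for three consecutive segment directions
`τ₁, τ, τ₃` meeting at 120° angles (turns in either direction, i.e. `τ₁·τ = τ₃·τ = 1/2`),
offsetting the lines by heights `h₁, h₂, h₃` changes the middle segment length by at
most `(2/√3)(|h₁| + |h₂| + |h₃|)`; in particular if `|hⱼ| ≤ a₂/(3√3)` the translated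
middle segment has length at least `a₂/3 > 0`. -/
theorem parallel_chain_injectivity_bound
    (τ τ₁ τ₃ : ℝ × ℝ)
    (hτ : τ.1 ^ 2 + τ.2 ^ 2 = 1) (hτ1 : τ₁.1 ^ 2 + τ₁.2 ^ 2 = 1)
    (hτ3 : τ₃.1 ^ 2 + τ₃.2 ^ 2 = 1)
    (hd1 : dot τ₁ τ = 1 / 2) (hd3 : dot τ₃ τ = 1 / 2)
    (a₂ : ℝ) (ha : 0 < a₂) (h₁ h₂ h₃ : ℝ) (P₁ P₂ Q₁ Q₂ : ℝ × ℝ)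
    (hP : P₂ - P₁ = a₂ • τ)
    (hQ1a : dot (Q₁ - P₁) (perp τ₁) = h₁)
    (hQ1b : dot (Q₁ - P₁) (perp τ) = h₂)
    (hQ2a : dot (Q₂ - P₂) (perp τ) = h₂)
    (hQ2b : dot (Q₂ - P₂) (perp τ₃) = h₃) :
    |dot (Q₂ - Q₁) τ - a₂| ≤ 2 / Real.sqrt 3 * (|h₁| + |h₂| + |h₃|) ∧
    ((|h₁| ≤ a₂ / (3 * Real.sqrt 3) ∧ |h₂| ≤ a₂ / (3 * Real.sqrt 3) ∧
        |h₃| ≤ a₂ / (3 * Real.sqrt 3)) →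
      a₂ / 3 ≤ dot (Q₂ - Q₁) τ ∧ 0 < dot (Q₂ - Q₁) τ) := by
  have hspos : (0:ℝ) < Real.sqrt 3 := Real.sqrt_pos.mpr (by norm_num)
  have hs3 : Real.sqrt 3 ^ 2 = 3 := Real.sq_sqrt (by norm_num)
  simp only [dot] at hd1 hd3
  obtain ⟨c, hc⟩ : ∃ c, τ₁.1 * τ.2 - τ₁.2 * τ.1 = c := ⟨_, rfl⟩
  obtain ⟨d, hd⟩ : ∃ d, τ₃.1 * τ.2 - τ₃.2 * τ.1 = d := ⟨_, rfl⟩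
  obtain ⟨A, hAdef⟩ : ∃ A, dot (Q₁ - P₁) τ = A := ⟨_, rfl⟩
  obtain ⟨B, hBdef⟩ : ∃ B, dot (Q₂ - P₂) τ = B := ⟨_, rfl⟩
  have hc2 : c ^ 2 = 3 / 4 := by
    have key : (τ₁.1 * τ.2 - τ₁.2 * τ.1) ^ 2 + (τ₁.1 * τ.1 + τ₁.2 * τ.2) ^ 2
        = (τ₁.1 ^ 2 + τ₁.2 ^ 2) * (τ.1 ^ 2 + τ.2 ^ 2) := by ring
    rw [hc, hd1, hτ, hτ1] at key; linarith
  have hd2 : d ^ 2 = 3 / 4 := by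
    have key : (τ₃.1 * τ.2 - τ₃.2 * τ.1) ^ 2 + (τ₃.1 * τ.1 + τ₃.2 * τ.2) ^ 2
        = (τ₃.1 ^ 2 + τ₃.2 ^ 2) * (τ.1 ^ 2 + τ.2 ^ 2) := by ring
    rw [hd, hd3, hτ, hτ3] at key; linarith
  have hs2nn : (0:ℝ) ≤ Real.sqrt 3 / 2 := by positivity
  have hcabs : |c| = Real.sqrt 3 / 2 := by
    rw [← Real.sqrt_sq_eq_abs,
      show c ^ 2 = (Real.sqrt 3 / 2) ^ 2 by rw [hc2, div_pow, hs3]; norm_num,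
      Real.sqrt_sq hs2nn]
  have hdabs : |d| = Real.sqrt 3 / 2 := by
    rw [← Real.sqrt_sq_eq_abs,
      show d ^ 2 = (Real.sqrt 3 / 2) ^ 2 by rw [hd2, div_pow, hs3]; norm_num,
      Real.sqrt_sq hs2nn]
  have hA : c * A = h₁ - h₂ / 2 := by
    rw [← hAdef, ← hc]
    simp only [dot, perp, Prod.fst_sub, Prod.snd_sub] at hQ1a hQ1b ⊢
    linear_combination ((Q₁.2 - P₁.2) * τ₁.1 - (Q₁.1 - P₁.1) * τ₁.2) * hτ
      + ((Q₁.1 - P₁.1) * τ.2 - (Q₁.2 - P₁.2) * τ.1) * hd1 + hQ1a - hQ1b / 2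
  have hB : d * B = h₃ - h₂ / 2 := by
    rw [← hBdef, ← hd]
    simp only [dot, perp, Prod.fst_sub, Prod.snd_sub] at hQ2a hQ2b ⊢
    linear_combination ((Q₂.2 - P₂.2) * τ₃.1 - (Q₂.1 - P₂.1) * τ₃.2) * hτ
      + ((Q₂.1 - P₂.1) * τ.2 - (Q₂.2 - P₂.2) * τ.1) * hd3 + hQ2b - hQ2a / 2
  have hP1 : P₂.1 - P₁.1 = a₂ * τ.1 := by
    have := congrArg Prod.fst hP; simpa using this
  have hP2 : P₂.2 - P₁.2 = a₂ * τ.2 := by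
    have := congrArg Prod.snd hP; simpa using this
  have hsum : dot (Q₂ - Q₁) τ = B + a₂ - A := by
    rw [← hAdef, ← hBdef]
    simp only [dot, Prod.fst_sub, Prod.snd_sub]
    linear_combination (τ.1 * hP1 + τ.2 * hP2 + a₂ * hτ)
  have hAbd : Real.sqrt 3 / 2 * |A| ≤ |h₁| + |h₂| / 2 := by
    calc Real.sqrt 3 / 2 * |A| = |c| * |A| := by rw [hcabs]
      _ = |c * A| := (abs_mul c A).symm
      _ = |h₁ - h₂ / 2| := by rw [hA]
      _ ≤ |h₁| + |h₂ / 2| := abs_sub h₁ (h₂ / 2)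
      _ = |h₁| + |h₂| / 2 := by rw [abs_div]; norm_num
  have hBbd : Real.sqrt 3 / 2 * |B| ≤ |h₃| + |h₂| / 2 := by
    calc Real.sqrt 3 / 2 * |B| = |d| * |B| := by rw [hdabs]
      _ = |d * B| := (abs_mul d B).symm
      _ = |h₃ - h₂ / 2| := by rw [hB]
      _ ≤ |h₃| + |h₂ / 2| := abs_sub h₃ (h₂ / 2)
      _ = |h₃| + |h₂| / 2 := by rw [abs_div]; norm_num
  have habsBA : |B - A| ≤ |A| + |B| := by
    calc |B - A| ≤ |B| + |A| := abs_sub B A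
      _ = |A| + |B| := by ring
  have key : |dot (Q₂ - Q₁) τ - a₂| ≤ 2 / Real.sqrt 3 * (|h₁| + |h₂| + |h₃|) := by
    rw [hsum, show B + a₂ - A - a₂ = B - A by ring, div_mul_eq_mul_div,
      le_div_iff₀ hspos]
    have h4 : Real.sqrt 3 * |B - A| ≤ Real.sqrt 3 * (|A| + |B|) :=
      mul_le_mul_of_nonneg_left habsBA hspos.le
    linarith [hAbd, hBbd]
  refine ⟨key, fun ⟨hb1, hb2, hb3⟩ => ?_⟩
  have hbound : 2 / Real.sqrt 3 * (|h₁| + |h₂| + |h₃|) ≤ 2 * a₂ / 3 := by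
    have h1 : |h₁| + |h₂| + |h₃| ≤ 3 * (a₂ / (3 * Real.sqrt 3)) := by linarith
    have hmul : Real.sqrt 3 * Real.sqrt 3 = 3 := Real.mul_self_sqrt (by norm_num)
    have h2 : 2 / Real.sqrt 3 * (3 * (a₂ / (3 * Real.sqrt 3))) = 2 * a₂ / 3 := by
      rw [show 2 / Real.sqrt 3 * (3 * (a₂ / (3 * Real.sqrt 3)))
          = 2 * a₂ / (Real.sqrt 3 * Real.sqrt 3) by ring, hmul]
    calc 2 / Real.sqrt 3 * (|h₁| + |h₂| + |h₃|)
        ≤ 2 / Real.sqrt 3 * (3 * (a₂ / (3 * Real.sqrt 3))) :=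
          mul_le_mul_of_nonneg_left h1 (by positivity)
      _ = 2 * a₂ / 3 := h2
  have hfin := abs_le.mp (key.trans hbound)
  constructor <;> linarith [hfin.1, hfin.2]
end

section
/- Let F⁻ be the closed segment in ℝ² from (−2/√3, 0) to (−1/√3, −1) and F⁺ the closed segment from (−2/√3, 0) to (−1/√3, 1) (the two facets of B^φ adjacent to the vertex (−2/√3, 0)). Then there exist no N₁ ∈ F⁻ and N₂ ∈ F⁺ with φ(N₁ + N₂) ≤ 1 and φ(N₁ − N₂) ≤ 1. (Consequently, the conical "X" quadruple junction admits no constant paired calibration: there are no vectors ξ₁, ξ₂, ξ₃, ξ₄ ∈ ℝ² with φ(ξᵢ − ξⱼ) ≤ 1 for all i, j and ξᵢ − ξ_{i+1} = Nᵢ, since the Cahn–Hoffman constraints force N₁ ∈ F⁻, N₂ ∈ F⁺, N₃ = −N₁, N₄ = −N₂, and then ξ₁ − ξ₃ = N₁ + N₂ and ξ₂ − ξ₄ = N₂ − N₁ cannot both lie in B^φ.) -/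
open Real

lemma abs_snd_le_phi (x : ℝ × ℝ) : |x.2| ≤ phi x :=
  le_max_left _ _

lemma abs_sqrt_three_mul_fst_add_snd_le_two_mul_phi (x : ℝ × ℝ) :
    |√3 * x.1 + x.2| ≤ 2 * phi x := by
  have : |√3 * x.1 + x.2| / 2 ≤ phi x := (le_max_left _ _).trans (le_max_right _ _)
  linarith

lemma abs_sqrt_three_mul_fst_sub_snd_le_two_mul_phi (x : ℝ × ℝ) :
    |√3 * x.1 - x.2| ≤ 2 * phi x := by
  have : |√3 * x.1 - x.2| / 2 ≤ phi x := (le_max_right _ _).trans (le_max_right _ _)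
  linarith

lemma sqrt_three_mul_fst_add_snd_eq_of_mem_segment {N : ℝ × ℝ}
    (hN : N ∈ segment ℝ ((-(2 / √3), 0) : ℝ × ℝ) ((-(1 / √3), -1) : ℝ × ℝ)) :
    √3 * N.1 + N.2 = -2 := by
  obtain ⟨a, b, -, -, hab, rfl⟩ := hN
  have : √3 ≠ 0 := by positivity
  simp only [Prod.fst_add, Prod.snd_add, Prod.smul_mk, smul_eq_mul]
  field_simp
  linarith

lemma sqrt_three_mul_fst_sub_snd_eq_of_mem_segment {N : ℝ × ℝ}
    (hN : N ∈ segment ℝ ((-(2 / √3), 0) : ℝ × ℝ) ((-(1 / √3), 1) : ℝ × ℝ)) :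
    √3 * N.1 - N.2 = -2 := by
  obtain ⟨a, b, -, -, hab, rfl⟩ := hN
  have : √3 ≠ 0 := by positivity
  simp only [Prod.fst_add, Prod.snd_add, Prod.smul_mk, smul_eq_mul]
  field_simp
  linarith

theorem four_le_two_mul_phi_add_add_phi_sub {N₁ N₂ : ℝ × ℝ}
    (h₁ : √3 * N₁.1 + N₁.2 = -2) (h₂ : √3 * N₂.1 - N₂.2 = -2) :
    4 ≤ 2 * phi (N₁ + N₂) + phi (N₁ - N₂) := by
  have hplus := abs_le.mp (abs_sqrt_three_mul_fst_add_snd_le_two_mul_phi (N₁ + N₂))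
  have hminus := abs_le.mp (abs_sqrt_three_mul_fst_sub_snd_le_two_mul_phi (N₁ + N₂))
  have hvert := abs_le.mp (abs_snd_le_phi (N₁ - N₂))
  simp only [Prod.fst_add, Prod.snd_add, Prod.snd_sub] at hplus hminus hvert
  linarith [hplus.1, hminus.1, hvert.1]

/-- No constant paired calibration for the conical "X" quadruple junction: there are no
`N₁` in the facet of `B^φ` from `(−2/√3, 0)` to `(−1/√3, −1)` and `N₂` in the facet from
`(−2/√3, 0)` to `(−1/√3, 1)` with both `N₁ + N₂` and `N₁ − N₂` in `B^φ`. -/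
theorem no_constant_paired_calibration_X_junction :
    ¬ ∃ N₁ N₂ : ℝ × ℝ,
      N₁ ∈ segment ℝ ((-(2 / Real.sqrt 3), 0) : ℝ × ℝ) ((-(1 / Real.sqrt 3), -1) : ℝ × ℝ) ∧
      N₂ ∈ segment ℝ ((-(2 / Real.sqrt 3), 0) : ℝ × ℝ) ((-(1 / Real.sqrt 3), 1) : ℝ × ℝ) ∧
      phi (N₁ + N₂) ≤ 1 ∧ phi (N₁ - N₂) ≤ 1 := by
  rintro ⟨N₁, N₂, hN₁, hN₂, hplus, hminus⟩
  have := four_le_two_mul_phi_add_add_phi_sub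
    (sqrt_three_mul_fst_add_snd_eq_of_mem_segment hN₁)
    (sqrt_three_mul_fst_sub_snd_eq_of_mem_segment hN₂)
  linarith
end

section
/- The unique pair (x, y) of strictly positive real numbers satisfying both y⁴·x²·(x−1) + y²·(x²−1) + 2y − 1 = 0 and y⁴·x·(x−1)² + y³·(x−1) + y²·(x−1)·(2x−1) + y·(x+1) − 1 = 0 is (x, y) = (1, 1/2). -/
/-- The unique pair of strictly positive reals solving the Brakke-type spoon
self-shrinker system is `(x, y) = (1, 1/2)`. -/
theorem spoon_system_unique_positive_solution (x y : ℝ) (hx : 0 < x) (hy : 0 < y) :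
    (y ^ 4 * x ^ 2 * (x - 1) + y ^ 2 * (x ^ 2 - 1) + 2 * y - 1 = 0 ∧
      y ^ 4 * x * (x - 1) ^ 2 + y ^ 3 * (x - 1) +
        y ^ 2 * (x - 1) * (2 * x - 1) + y * (x + 1) - 1 = 0) ↔
    (x = 1 ∧ y = 1 / 2) := by
  constructor
  · rintro ⟨h1, h2⟩
    have key : (x - 1) * (y * (x * y ^ 3 - y ^ 2 + (2 - x) * y - 1)) = 0 := by
      linear_combination h1 - h2
    rcases mul_eq_zero.mp key with hx1 | hrest
    · have hx1' : x = 1 := by linarith [sub_eq_zero.mp hx1]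
      subst hx1'
      refine ⟨rfl, ?_⟩
      linear_combination h1 / 2
    · rcases mul_eq_zero.mp hrest with hy0 | hr
      · exact absurd hy0 (ne_of_gt hy)
      · by_cases hy1 : y = 1
        · subst hy1
          have hx3 : x ^ 3 = 0 := by linear_combination h1
          have : x = 0 := by
            have := pow_eq_zero_iff (n := 3) (by norm_num) |>.mp hx3
            exact this
          linarith
        · exfalso
          have h5 : (x * (y * (y + 1)) - (y - 1)) * (y - 1) = 0 := by
            linear_combination hr
          have hg : x * (y * (y + 1)) - (y - 1) = 0 := by
            rcases mul_eq_zero.mp h5 with h | h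
            · exact h
            · exact absurd (by linarith [sub_eq_zero.mp h] : y = 1) hy1
          have heq : y ^ 4 * (y - 1) ^ 2 * (2 * y ^ 2 + 3 * y + 3) = 0 := by
            linear_combination
              (y ^ 4 * ((x * (y * (y + 1))) ^ 2 + (x * (y * (y + 1))) * (y - 1) + (y - 1) ^ 2)
                + (y ^ 2 - y ^ 4) * (y * (y + 1)) * (x * (y * (y + 1)) + (y - 1))) * hg
              - (y * (y + 1)) ^ 3 * h1
          have hy4 : (0:ℝ) < y ^ 4 := by positivity
          have hsq : (0:ℝ) < (y - 1) ^ 2 := by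
            have : y - 1 ≠ 0 := sub_ne_zero.mpr hy1
            positivity
          have hQ : (0:ℝ) < 2 * y ^ 2 + 3 * y + 3 := by positivity
          nlinarith [mul_pos (mul_pos hy4 hsq) hQ]
  · rintro ⟨hx1, hy1⟩
    subst hx1; subst hy1
    norm_num
end

section
/- There are no strictly positive real numbers x, y satisfying both y·(2x − 1) = x·(x + y) and y²·(2x − 1) = x²·(2y − 1). -/
/-- The system arising from the candidate shrinker with two half-lines at opposite
vertices of the hexagon has no solution in strictly positive reals. -/
theorem opposite_halflines_system_no_positive_solution :
    ¬ ∃ x y : ℝ, 0 < x ∧ 0 < y ∧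
      y * (2 * x - 1) = x * (x + y) ∧
      y ^ 2 * (2 * x - 1) = x ^ 2 * (2 * y - 1) := by
  rintro ⟨x, y, hx, hy, h1, h2⟩
  have h3 : y * (x + y) = x * (2 * y - 1) := by
    apply mul_left_cancel₀ (ne_of_gt hx)
    nlinarith
  have h4 : y * (x - 1) = x ^ 2 := by nlinarith
  have hx1 : 1 < x := by nlinarith [sq_nonneg x]
  nlinarith [sq_nonneg (2*x - 1), mul_pos hx hy, sq_nonneg (x - y), mul_pos (mul_pos hx hy) hy]
end
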